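/- arXiv:1702.00671 — 7 statements merged into one kernel-verified Lean document; each statement's English description precedes it below -/
import Mathlib

section
/- Let A ∈ ℂ^{n×n}, let v_1, …, v_{k+1} ∈ ℂ^n, let H_k ∈ ℂ^{k×k} be upper Hessenberg, and let h_{k+1,k} ∈ ℂ, such that A·V_k = V_k·H_k + h_{k+1,k}·v_{k+1}·e_k^*, where V_k = [v_1, …, v_k]. Then for every polynomial p with deg p < k one has p(A)·v_1 = V_k·p(H_k)·e_1. -/
/-!
If `A V = V H + F` and `F` annihilates the Krylov vectors `x, H x, …, H^{m-1} x`, then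
induction on `m` gives `A^m (V x) = V (H^m x)`, hence `p(A) (V x) = V (p(H) x)` for `deg p ≤ m`.
For the Arnoldi relation, `F = h v_{k+1} e_k^*` only sees the last coordinate, and
`H^j e₁` vanishes below position `j + 1` because `H` is upper Hessenberg; so the
hypothesis holds as long as `j < k - 1`, i.e. for every `p` of degree `< k`.
-/

open Polynomial Matrix Finset

namespace Matrix

theorem pow_apply_eq_zero_of_isHessenberg {R : Type*} [Semiring R] {k : ℕ}
    {H : Matrix (Fin k) (Fin k) R} (hH : ∀ i j : Fin k, (j : ℕ) + 1 < i → H i j = 0) :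
    ∀ (m : ℕ) {i j : Fin k}, (j : ℕ) + m < i → (H ^ m) i j = 0
  | 0, i, j, hij => one_apply_ne (by rintro rfl; omega)
  | m + 1, i, j, hij => by
    rw [pow_succ, mul_apply]
    refine sum_eq_zero fun l _ => ?_
    by_cases hl : (j : ℕ) + 1 < l
    · rw [hH l j hl, mul_zero]
    · rw [pow_apply_eq_zero_of_isHessenberg hH m (by omega), zero_mul]

section Krylov

variable {R : Type*} {n κ : Type*} [Fintype n] [DecidableEq n] [Fintype κ] [DecidableEq κ]
  {A : Matrix n n R} {V F : Matrix n κ R} {H : Matrix κ κ R} {x : κ → R}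

theorem pow_mulVec_mulVec_of_mul_eq_mul_add [Semiring R] (hrel : A * V = V * H + F) {m : ℕ}
    (hF : ∀ j < m, F *ᵥ (H ^ j *ᵥ x) = 0) : A ^ m *ᵥ (V *ᵥ x) = V *ᵥ (H ^ m *ᵥ x) := by
  induction m with
  | zero => simp
  | succ m ih =>
    calc A ^ (m + 1) *ᵥ (V *ᵥ x) = (A * V) *ᵥ (H ^ m *ᵥ x) := by
          rw [pow_succ', ← mulVec_mulVec, ih fun j hj => hF j (by omega), mulVec_mulVec]
      _ = V *ᵥ (H ^ (m + 1) *ᵥ x) + F *ᵥ (H ^ m *ᵥ x) := by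
          rw [hrel, add_mulVec, ← mulVec_mulVec, mulVec_mulVec x H, ← pow_succ']
      _ = V *ᵥ (H ^ (m + 1) *ᵥ x) := by rw [hF m m.lt_succ_self, add_zero]

theorem aeval_mulVec_mulVec_of_mul_eq_mul_add [CommSemiring R] (hrel : A * V = V * H + F)
    (p : R[X]) (hF : ∀ j < p.natDegree, F *ᵥ (H ^ j *ᵥ x) = 0) :
    aeval A p *ᵥ (V *ᵥ x) = V *ᵥ (aeval H p *ᵥ x) := by
  simp only [aeval_eq_sum_range, sum_mulVec, mulVec_sum, smul_mulVec, mulVec_smul]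
  refine sum_congr rfl fun j hj => ?_
  rw [pow_mulVec_mulVec_of_mul_eq_mul_add hrel fun i hi =>
    hF i (by rw [mem_range] at hj; omega)]

end Krylov

theorem of_mul_ite_mulVec_eq_zero {R m κ : Type*} [Semiring R] [Fintype κ] (u : m → R)
    (P : κ → Prop) [DecidablePred P] {w : κ → R} (hw : ∀ j, P j → w j = 0) :
    (of fun i j => u i * if P j then 1 else 0) *ᵥ w = 0 := by
  ext i
  refine sum_eq_zero fun j _ => ?_
  by_cases hj : P j <;> simp [hj, hw]

end Matrix

/-- Indices are `0`-based: the columns of `V` are `v 0, …, v (k-1)`, and `v k` is the paper's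
`v_{k+1}`. -/
theorem stmt2 (n k : ℕ) (hk : 1 ≤ k)
    (A : Matrix (Fin n) (Fin n) ℂ) (v : ℕ → Fin n → ℂ)
    (Hk : Matrix (Fin k) (Fin k) ℂ)
    (hHess : ∀ i j : Fin k, (j : ℕ) + 1 < (i : ℕ) → Hk i j = 0)
    (h1 : ℂ)
    (V : Matrix (Fin n) (Fin k) ℂ) (hV : V = Matrix.of fun (i : Fin n) (j : Fin k) => v (j : ℕ) i)
    (hrel : A * V =
      V * Hk + h1 • Matrix.of fun i (j : Fin k) => v k i * (if (j : ℕ) = k - 1 then 1 else 0)) :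
    ∀ p : Polynomial ℂ, p.natDegree < k →
      (Polynomial.aeval A p).mulVec (v 0) =
        V.mulVec ((Polynomial.aeval Hk p).mulVec (Pi.single (⟨0, hk⟩ : Fin k) 1)) := by
  intro p hp
  have hv0 : V *ᵥ Pi.single ⟨0, hk⟩ 1 = v 0 := by
    subst hV
    rw [mulVec_single_one]
    rfl
  rw [← hv0]
  refine aeval_mulVec_mulVec_of_mul_eq_mul_add hrel p fun j hj => ?_
  rw [smul_mulVec, of_mul_ite_mulVec_eq_zero _ _ fun i hi => ?_, smul_zero]
  rw [mulVec_single_one]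
  exact pow_apply_eq_zero_of_isHessenberg hHess j (by simp only [hi]; omega)
end

section
/- Fix δ ∈ ℂ and 1 ≤ k ≤ N−1. Then the matrix Q_{k+1}(δ) is unitary, and Q_{k+1}(δ)^*·(H̄_k − δ·Ī_k) = [R; 0] ∈ ℂ^{(k+1)×k}, where R ∈ ℂ^{k×k} is upper triangular with diagonal entries R_{ℓ,ℓ} = h_{ℓ+1,ℓ}·σ_ℓ(δ)/σ_{ℓ−1}(δ), which are positive real numbers, and the last row of the product is zero. -/
open Polynomial Matrix Finset

noncomputable def sigmaP (q : ℕ → Polynomial ℂ) (δ : ℂ) (k : ℕ) : ℝ :=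
  Real.sqrt (∑ j ∈ Finset.range (k + 1), ‖(q j).eval δ‖ ^ 2)

/-- The conjugate transpose `Q_{k+1}(δ)^*` of the unitary QR-factor, defined entrywise in
terms of the orthonormal polynomials (`0`-based rows/columns). -/
noncomputable def QstarMat (q : ℕ → Polynomial ℂ) (δ : ℂ) (k : ℕ) :
    Matrix (Fin (k + 1)) (Fin (k + 1)) ℂ :=
  Matrix.of fun i j =>
    if (i : ℕ) = k then (-1 : ℂ) ^ k * (q (j : ℕ)).eval δ / (sigmaP q δ k : ℂ)
    else if (j : ℕ) ≤ (i : ℕ) then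
      -((q (j : ℕ)).eval δ * (starRingEnd ℂ) ((q ((i : ℕ) + 1)).eval δ)) /
        ((sigmaP q δ ((i : ℕ) + 1) : ℂ) * (sigmaP q δ (i : ℕ) : ℂ))
    else if (j : ℕ) = (i : ℕ) + 1 then ((sigmaP q δ (i : ℕ) / sigmaP q δ ((i : ℕ) + 1) : ℝ) : ℂ)
    else 0

/-!
Write `a_j = q_j(δ)`, so that `σ_{m+1}² = σ_m² + |a_{m+1}|²`. For `i < k`, row `i` of `Q^*` is
`c_i (a_0, …, a_i) + (σ_i/σ_{i+1}) e_{i+1}` with `c_i = -conj a_{i+1} / (σ_i σ_{i+1})`, which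
makes it orthogonal to `a`; the last row is `±a/σ_k`. Every later row agrees with a multiple of
`a` on the support of row `i`, which gives orthonormality. The recurrence says that
`(a_0, …, a_k)` is a left null vector of `H̄_k - δ Ī_k`; with the Hessenberg shape this kills the
last row and everything below the diagonal of the product, and leaves
`h_{i+1,i} (σ_i/σ_{i+1} + |a_{i+1}|²/(σ_i σ_{i+1})) = h_{i+1,i} σ_{i+1}/σ_i` on the diagonal.
-/

open ComplexConjugate

namespace HessenbergQR

noncomputable def prefixNorm (a : ℕ → ℂ) (m : ℕ) : ℝ :=
  √(∑ j ∈ range (m + 1), ‖a j‖ ^ 2)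

noncomputable def qrRow (a : ℕ → ℂ) (k i j : ℕ) : ℂ :=
  if i = k then (-1 : ℂ) ^ k * a j / (prefixNorm a k : ℂ)
  else if j ≤ i then
    -(a j * conj (a (i + 1))) / ((prefixNorm a (i + 1) : ℂ) * (prefixNorm a i : ℂ))
  else if j = i + 1 then ((prefixNorm a i / prefixNorm a (i + 1) : ℝ) : ℂ)
  else 0

noncomputable def qrCoeff (a : ℕ → ℂ) (k i : ℕ) : ℂ :=
  if i = k then (-1 : ℂ) ^ k / (prefixNorm a k : ℂ)
  else -conj (a (i + 1)) / ((prefixNorm a (i + 1) : ℂ) * (prefixNorm a i : ℂ))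

variable {a : ℕ → ℂ} {k i j : ℕ}

theorem prefixNorm_pos (ha : a 0 ≠ 0) (m : ℕ) : 0 < prefixNorm a m :=
  Real.sqrt_pos.2 <| lt_of_lt_of_le (by positivity) <|
    single_le_sum (f := fun j => ‖a j‖ ^ 2) (fun _ _ => by positivity) (mem_range.2 m.succ_pos)

theorem prefixNorm_ofReal_ne_zero (ha : a 0 ≠ 0) (m : ℕ) : (prefixNorm a m : ℂ) ≠ 0 :=
  Complex.ofReal_ne_zero.2 (prefixNorm_pos ha m).ne'

theorem prefixNorm_sq (m : ℕ) : prefixNorm a m ^ 2 = ∑ j ∈ range (m + 1), ‖a j‖ ^ 2 :=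
  Real.sq_sqrt (by positivity)

theorem prefixNorm_succ_sq (m : ℕ) :
    (prefixNorm a (m + 1) : ℂ) ^ 2 =
      (prefixNorm a m : ℂ) ^ 2 + a (m + 1) * conj (a (m + 1)) := by
  rw [Complex.mul_conj', ← Complex.ofReal_pow, ← Complex.ofReal_pow, prefixNorm_sq,
    prefixNorm_sq, sum_range_succ]
  push_cast; rfl

theorem sum_mul_conj (m : ℕ) :
    ∑ j ∈ range (m + 1), a j * conj (a j) = (prefixNorm a m : ℂ) ^ 2 := by
  simp only [Complex.mul_conj', ← Complex.ofReal_pow, prefixNorm_sq, Complex.ofReal_sum]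

theorem qrRow_of_le (hj : j ≤ i) : qrRow a k i j = qrCoeff a k i * a j := by
  unfold qrRow qrCoeff
  split_ifs <;> ring

theorem qrRow_succ (hik : i ≠ k) :
    qrRow a k i (i + 1) = (prefixNorm a i : ℂ) / (prefixNorm a (i + 1) : ℂ) := by
  rw [qrRow, if_neg hik, if_neg (by omega), if_pos rfl, Complex.ofReal_div]

theorem qrRow_of_succ_lt (hik : i ≠ k) (hj : i + 1 < j) : qrRow a k i j = 0 := by
  rw [qrRow, if_neg hik, if_neg (by omega), if_neg (by omega)]

theorem sum_qrRow_mul_of_lt (hik : i < k) (f : ℕ → ℂ) :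
    ∑ j ∈ range (k + 1), qrRow a k i j * f j =
      qrCoeff a k i * ∑ j ∈ range (i + 1), a j * f j +
        (prefixNorm a i : ℂ) / (prefixNorm a (i + 1) : ℂ) * f (i + 1) := by
  rw [← sum_subset (range_subset_range.2 (by omega : i + 2 ≤ k + 1)), sum_range_succ,
    qrRow_succ hik.ne, mul_sum]
  · congr 1
    refine sum_congr rfl fun j hj => ?_
    rw [qrRow_of_le (by simp at hj; omega), mul_assoc]
  · intro j _ hj
    rw [qrRow_of_succ_lt hik.ne (by simp at hj; omega), zero_mul]

theorem sum_qrRow_last_mul (f : ℕ → ℂ) :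
    ∑ j ∈ range (k + 1), qrRow a k k j * f j =
      qrCoeff a k k * ∑ j ∈ range (k + 1), a j * f j := by
  rw [mul_sum]
  refine sum_congr rfl fun j hj => ?_
  rw [qrRow_of_le (by simp at hj; omega), mul_assoc]

theorem sum_mul_conj_qrRow (i : ℕ) :
    ∑ j ∈ range (i + 1), a j * conj (qrRow a k i j) =
      conj (qrCoeff a k i) * (prefixNorm a i : ℂ) ^ 2 := by
  rw [← sum_mul_conj, mul_sum]
  refine sum_congr rfl fun j hj => ?_
  rw [qrRow_of_le (by simp at hj; omega), map_mul]
  ring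

theorem sum_qrRow_mul_conj (ha : a 0 ≠ 0) (hik : i < k) :
    ∑ j ∈ range (k + 1), qrRow a k i j * conj (a j) = 0 := by
  have := prefixNorm_ofReal_ne_zero ha i
  have := prefixNorm_ofReal_ne_zero ha (i + 1)
  rw [sum_qrRow_mul_of_lt hik, sum_mul_conj, qrCoeff, if_neg hik.ne]
  field_simp
  ring

theorem sum_qrRow_mul_conj_qrRow_of_lt (ha : a 0 ≠ 0) {i' : ℕ} (hii' : i < i')
    (hi' : i' ≤ k) :
    ∑ j ∈ range (k + 1), qrRow a k i j * conj (qrRow a k i' j) = 0 := by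
  calc ∑ j ∈ range (k + 1), qrRow a k i j * conj (qrRow a k i' j)
      = conj (qrCoeff a k i') * ∑ j ∈ range (k + 1), qrRow a k i j * conj (a j) := by
        rw [mul_sum]
        refine sum_congr rfl fun j _ => ?_
        rcases le_or_gt j (i + 1) with hj | hj
        · rw [qrRow_of_le (by omega : j ≤ i'), map_mul]; ring
        · rw [qrRow_of_succ_lt (by omega) hj]; ring
    _ = 0 := by rw [sum_qrRow_mul_conj ha (by omega), mul_zero]

theorem sum_qrRow_mul_conj_self (ha : a 0 ≠ 0) (hi : i ≤ k) :
    ∑ j ∈ range (k + 1), qrRow a k i j * conj (qrRow a k i j) = 1 := by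
  rcases hi.lt_or_eq with hik | rfl
  · have := prefixNorm_ofReal_ne_zero ha i
    have := prefixNorm_ofReal_ne_zero ha (i + 1)
    rw [sum_qrRow_mul_of_lt hik, sum_mul_conj_qrRow, qrRow_succ hik.ne, qrCoeff, if_neg hik.ne]
    simp only [map_div₀, map_neg, map_mul, Complex.conj_ofReal, Complex.conj_conj]
    have := prefixNorm_succ_sq (a := a) i
    field_simp
    linear_combination -this
  · rw [sum_qrRow_last_mul, sum_mul_conj_qrRow, qrCoeff, if_pos rfl]
    simp only [map_div₀, map_pow, map_neg, map_one, Complex.conj_ofReal]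
    have := prefixNorm_ofReal_ne_zero ha i
    field_simp
    rw [← pow_mul]; norm_num

theorem sum_qrRow_mul_conj_qrRow (ha : a 0 ≠ 0) {i' : ℕ} (hi : i ≤ k) (hi' : i' ≤ k) :
    ∑ j ∈ range (k + 1), qrRow a k i j * conj (qrRow a k i' j) = if i = i' then 1 else 0 := by
  rcases lt_trichotomy i i' with h | rfl | h
  · rw [sum_qrRow_mul_conj_qrRow_of_lt ha h hi', if_neg h.ne]
  · rw [sum_qrRow_mul_conj_self ha hi, if_pos rfl]
  · rw [if_neg h.ne', ← star_zero, ← sum_qrRow_mul_conj_qrRow_of_lt ha h hi, star_sum]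
    refine sum_congr rfl fun j _ => ?_
    rw [star_mul', Complex.star_def, Complex.conj_conj, mul_comm]

theorem sum_range_mul_eq_of_forall_eq_zero {f : ℕ → ℂ} (hf : ∀ p, j + 1 < p → f p = 0)
    (g : ℕ → ℂ) (hi : j + 1 ≤ i) :
    ∑ p ∈ range (i + 1), g p * f p = ∑ p ∈ range (j + 2), g p * f p := by
  refine (sum_subset (range_subset_range.2 (by omega)) fun p _ hp => ?_).symm
  rw [hf p (by simp at hp; omega), mul_zero]

variable {f : ℕ → ℂ}

theorem sum_qrRow_mul_eq_zero_of_lt (hf : ∀ p, j + 1 < p → f p = 0)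
    (hnull : ∑ p ∈ range (k + 1), a p * f p = 0) (hji : j < i) (hik : i ≤ k) :
    ∑ p ∈ range (k + 1), qrRow a k i p * f p = 0 := by
  rcases hik.lt_or_eq with hik | rfl
  · rw [sum_qrRow_mul_of_lt hik, hf (i + 1) (by omega),
      sum_range_mul_eq_of_forall_eq_zero hf a hji,
      ← sum_range_mul_eq_of_forall_eq_zero hf a (by omega : j + 1 ≤ k), hnull]
    ring
  · rw [sum_qrRow_last_mul, hnull, mul_zero]

theorem sum_qrRow_mul_self (ha : a 0 ≠ 0) (hf : ∀ p, i + 1 < p → f p = 0)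
    (hnull : ∑ p ∈ range (k + 1), a p * f p = 0) (hik : i < k) :
    ∑ p ∈ range (k + 1), qrRow a k i p * f p =
      f (i + 1) * ((prefixNorm a (i + 1) : ℂ) / (prefixNorm a i : ℂ)) := by
  have hpartial : ∑ p ∈ range (i + 1), a p * f p = -(a (i + 1) * f (i + 1)) := by
    rw [sum_range_mul_eq_of_forall_eq_zero hf a hik, sum_range_succ] at hnull
    linear_combination hnull
  have := prefixNorm_ofReal_ne_zero ha i
  have := prefixNorm_ofReal_ne_zero ha (i + 1)
  rw [sum_qrRow_mul_of_lt hik, hpartial, qrCoeff, if_neg hik.ne]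
  field_simp
  linear_combination -f (i + 1) * prefixNorm_succ_sq (a := a) i

end HessenbergQR

open HessenbergQR

theorem QstarMat_apply (q : ℕ → Polynomial ℂ) (δ : ℂ) (k : ℕ) (i j : Fin (k + 1)) :
    QstarMat q δ k i j = qrRow (fun m => (q m).eval δ) k i j :=
  rfl

theorem QstarMat_mem_unitaryGroup (q : ℕ → Polynomial ℂ) (δ : ℂ) (k : ℕ)
    (hq : (q 0).eval δ ≠ 0) :
    QstarMat q δ k ∈ unitaryGroup (Fin (k + 1)) ℂ := by
  rw [mem_unitaryGroup_iff]
  ext i i'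
  simp only [mul_apply, star_apply, QstarMat_apply, RCLike.star_def]
  rw [Fin.sum_univ_eq_sum_range (fun j => qrRow _ k i j * conj (qrRow _ k i' j)),
    sum_qrRow_mul_conj_qrRow hq (Nat.lt_succ_iff.1 i.isLt) (Nat.lt_succ_iff.1 i'.isLt), one_apply]
  simp only [Fin.ext_iff]

def extCol {m n : ℕ} (M : Matrix (Fin m) (Fin n) ℂ) (j : Fin n) (p : ℕ) : ℂ :=
  if hp : p < m then M ⟨p, hp⟩ j else 0

theorem QstarMat_mul_apply {n : ℕ} (q : ℕ → Polynomial ℂ) (δ : ℂ) (k : ℕ)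
    (M : Matrix (Fin (k + 1)) (Fin n) ℂ) (i : Fin (k + 1)) (j : Fin n) :
    (QstarMat q δ k * M) i j =
      ∑ p ∈ range (k + 1), qrRow (fun m => (q m).eval δ) k i p * extCol M j p := by
  rw [mul_apply, ← Fin.sum_univ_eq_sum_range]
  simp only [QstarMat_apply, extCol, Fin.is_lt, dif_pos]

theorem sum_eval_mul_hessenberg_sub_eq_zero {N : ℕ} (H : Matrix (Fin N) (Fin N) ℂ)
    (q : ℕ → Polynomial ℂ) (δ : ℂ) (j : ℕ) (hj : j + 1 < N)
    (hrec : Polynomial.C (H ⟨j + 1, hj⟩ ⟨j, Nat.lt_of_succ_lt hj⟩) * q (j + 1) =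
      Polynomial.X * q j -
        ∑ p : Fin (j + 1),
          Polynomial.C (H ⟨p, Nat.lt_trans p.isLt hj⟩ ⟨j, Nat.lt_of_succ_lt hj⟩) * q p) :
    ∑ p : Fin (j + 2), (q p).eval δ *
      (H ⟨p, p.isLt.trans_le hj⟩ ⟨j, Nat.lt_of_succ_lt hj⟩ -
        δ * if (p : ℕ) = j then 1 else 0) = 0 := by
  have heval := congrArg (Polynomial.eval δ) hrec
  simp only [Polynomial.eval_mul, Polynomial.eval_C, Polynomial.eval_sub, Polynomial.eval_X,
    Polynomial.eval_finsetSum] at heval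
  rw [Fin.sum_univ_castSucc]
  simp only [Fin.val_castSucc, Fin.val_last, mul_sub, sum_sub_distrib, mul_ite, mul_one, mul_zero,
    if_neg (Nat.succ_ne_self j), sub_zero]
  rw [Fin.sum_univ_eq_sum_range (fun p => if p = j then (q p).eval δ * δ else 0), sum_ite_eq',
    if_pos (self_mem_range_succ j)]
  simp only [mul_comm (H _ _)] at heval
  linear_combination heval

section ShiftedHessenberg

variable {N k : ℕ} {H : Matrix (Fin N) (Fin N) ℂ} {δ : ℂ} {hkN : k < N}
  {M : Matrix (Fin (k + 1)) (Fin k) ℂ}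

theorem extCol_of_lt (hM : M = H.submatrix (Fin.castLE hkN) (Fin.castLE hkN.le) -
      δ • Matrix.of fun (i : Fin (k + 1)) (j : Fin k) => if (i : ℕ) = (j : ℕ) then 1 else 0)
    (j : Fin k) {p : ℕ} (hp : p < k + 1) :
    extCol M j p =
      H ⟨p, hp.trans_le hkN⟩ ⟨j, j.isLt.trans hkN⟩ - δ * if p = j then 1 else 0 := by
  simp only [extCol, dif_pos hp, hM, Matrix.sub_apply, Matrix.smul_apply, submatrix_apply,
    of_apply, smul_eq_mul]
  rfl

theorem extCol_eq_zero (hHess : ∀ i j : Fin N, (j : ℕ) + 1 < (i : ℕ) → H i j = 0)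
    (hM : M = H.submatrix (Fin.castLE hkN) (Fin.castLE hkN.le) -
      δ • Matrix.of fun (i : Fin (k + 1)) (j : Fin k) => if (i : ℕ) = (j : ℕ) then 1 else 0)
    (j : Fin k) (p : ℕ) (hjp : (j : ℕ) + 1 < p) : extCol M j p = 0 := by
  by_cases hp : p < k + 1
  · rw [extCol_of_lt hM j hp, hHess _ _ hjp, if_neg (by omega), mul_zero, sub_zero]
  · simp only [extCol, dif_neg hp]

theorem sum_eval_mul_extCol (hHess : ∀ i j : Fin N, (j : ℕ) + 1 < (i : ℕ) → H i j = 0)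
    (q : ℕ → Polynomial ℂ)
    (hqrec : ∀ (k : ℕ) (hk : k + 1 < N),
      Polynomial.C (H ⟨k + 1, hk⟩ ⟨k, Nat.lt_of_succ_lt hk⟩) * q (k + 1) =
        Polynomial.X * q k -
          ∑ j : Fin (k + 1),
            Polynomial.C (H ⟨(j : ℕ), Nat.lt_trans j.isLt hk⟩ ⟨k, Nat.lt_of_succ_lt hk⟩) *
              q (j : ℕ))
    (hM : M = H.submatrix (Fin.castLE hkN) (Fin.castLE hkN.le) -
      δ • Matrix.of fun (i : Fin (k + 1)) (j : Fin k) => if (i : ℕ) = (j : ℕ) then 1 else 0)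
    (j : Fin k) : ∑ p ∈ range (k + 1), (q p).eval δ * extCol M j p = 0 := by
  rw [sum_range_mul_eq_of_forall_eq_zero (extCol_eq_zero hHess hM j) _ j.isLt,
    ← Fin.sum_univ_eq_sum_range,
    ← sum_eval_mul_hessenberg_sub_eq_zero H q δ j (by omega) (hqrec j (by omega))]
  exact sum_congr rfl fun p _ => by rw [extCol_of_lt hM j (by omega)]

end ShiftedHessenberg

theorem stmt3_general (N : ℕ) (H : Matrix (Fin N) (Fin N) ℂ)
    (hHess : ∀ i j : Fin N, (j : ℕ) + 1 < (i : ℕ) → H i j = 0)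
    (hsub : ∀ (k : ℕ) (hk : k + 1 < N),
      0 < (H ⟨k + 1, hk⟩ ⟨k, Nat.lt_of_succ_lt hk⟩).re ∧
        (H ⟨k + 1, hk⟩ ⟨k, Nat.lt_of_succ_lt hk⟩).im = 0)
    (q : ℕ → Polynomial ℂ) (hq0 : q 0 = 1)
    (hqrec : ∀ (k : ℕ) (hk : k + 1 < N),
      Polynomial.C (H ⟨k + 1, hk⟩ ⟨k, Nat.lt_of_succ_lt hk⟩) * q (k + 1) =
        Polynomial.X * q k -
          ∑ j : Fin (k + 1),
            Polynomial.C (H ⟨(j : ℕ), Nat.lt_trans j.isLt hk⟩ ⟨k, Nat.lt_of_succ_lt hk⟩) *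
              q (j : ℕ))
    (δ : ℂ) (k : ℕ) (hkN : k < N)
    (M : Matrix (Fin (k + 1)) (Fin k) ℂ)
    (hM : M = H.submatrix (Fin.castLE hkN) (Fin.castLE hkN.le) -
      δ • Matrix.of fun (i : Fin (k + 1)) (j : Fin k) => if (i : ℕ) = (j : ℕ) then 1 else 0) :
    (QstarMat q δ k * (QstarMat q δ k)ᴴ = 1 ∧ (QstarMat q δ k)ᴴ * QstarMat q δ k = 1) ∧
    (∀ j : Fin k, (QstarMat q δ k * M) ⟨k, Nat.lt_succ_self k⟩ j = 0) ∧
    (∀ (i : Fin (k + 1)) (j : Fin k), (j : ℕ) < (i : ℕ) → (QstarMat q δ k * M) i j = 0) ∧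
    (∀ j : Fin k,
      (QstarMat q δ k * M) (Fin.castSucc j) j =
        H ⟨(j : ℕ) + 1, Nat.lt_of_le_of_lt (Nat.succ_le_of_lt j.isLt) hkN⟩
            ⟨(j : ℕ), Nat.lt_trans j.isLt hkN⟩ *
          ((sigmaP q δ ((j : ℕ) + 1) / sigmaP q δ (j : ℕ) : ℝ) : ℂ) ∧
      0 < ((QstarMat q δ k * M) (Fin.castSucc j) j).re ∧
      ((QstarMat q δ k * M) (Fin.castSucc j) j).im = 0) := by
  have ha : (q 0).eval δ ≠ 0 := by simp [hq0]
  have hU := QstarMat_mem_unitaryGroup q δ k ha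
  have hzero := extCol_eq_zero hHess hM
  have hnull := sum_eval_mul_extCol hHess q hqrec hM
  refine ⟨⟨mem_unitaryGroup_iff.1 hU, mem_unitaryGroup_iff'.1 hU⟩, fun j => ?_,
    fun i j hji => ?_, fun j => ?_⟩
  · rw [QstarMat_mul_apply]
    exact sum_qrRow_mul_eq_zero_of_lt (hzero j) (hnull j) j.isLt le_rfl
  · rw [QstarMat_mul_apply]
    exact sum_qrRow_mul_eq_zero_of_lt (hzero j) (hnull j) hji (Nat.lt_succ_iff.1 i.isLt)
  · have hdiag : (QstarMat q δ k * M) j.castSucc j =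
        H ⟨j + 1, by omega⟩ ⟨j, by omega⟩ *
          ((sigmaP q δ (j + 1) / sigmaP q δ j : ℝ) : ℂ) := by
      rw [QstarMat_mul_apply, Fin.val_castSucc, sum_qrRow_mul_self ha (hzero j) (hnull j) j.isLt,
        extCol_of_lt hM j (by omega), if_neg (by omega), mul_zero, sub_zero, Complex.ofReal_div]
      rfl
    have hσ : 0 < sigmaP q δ (j + 1) / sigmaP q δ j :=
      div_pos (prefixNorm_pos ha _) (prefixNorm_pos ha _)
    obtain ⟨hre, him⟩ := hsub j (by omega)
    refine ⟨hdiag, ?_, ?_⟩ <;> rw [hdiag]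
    · simpa [Complex.mul_re] using mul_pos hre hσ
    · simp [Complex.mul_im, him]

/-- `Q_{k+1}(δ)` is unitary and `Q_{k+1}(δ)^* (H̄_k - δ Ī_k)` is upper
triangular (last row zero) with positive real diagonal entries
`R_{ℓℓ} = h_{ℓ+1,ℓ} σ_ℓ(δ)/σ_{ℓ-1}(δ)`. -/
theorem stmt3 (N : ℕ) (hN : 1 ≤ N) (H : Matrix (Fin N) (Fin N) ℂ)
    (hHess : ∀ i j : Fin N, (j : ℕ) + 1 < (i : ℕ) → H i j = 0)
    (hsub : ∀ (k : ℕ) (hk : k + 1 < N),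
      0 < (H ⟨k + 1, hk⟩ ⟨k, Nat.lt_of_succ_lt hk⟩).re ∧
        (H ⟨k + 1, hk⟩ ⟨k, Nat.lt_of_succ_lt hk⟩).im = 0)
    (q : ℕ → Polynomial ℂ) (hq0 : q 0 = 1)
    (hqrec : ∀ (k : ℕ) (hk : k + 1 < N),
      Polynomial.C (H ⟨k + 1, hk⟩ ⟨k, Nat.lt_of_succ_lt hk⟩) * q (k + 1) =
        Polynomial.X * q k -
          ∑ j : Fin (k + 1),
            Polynomial.C (H ⟨(j : ℕ), Nat.lt_trans j.isLt hk⟩ ⟨k, Nat.lt_of_succ_lt hk⟩) *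
              q (j : ℕ))
    (δ : ℂ) (k : ℕ) (hk1 : 1 ≤ k) (hkN : k < N)
    (M : Matrix (Fin (k + 1)) (Fin k) ℂ)
    (hM : M = H.submatrix (Fin.castLE hkN) (Fin.castLE hkN.le) -
      δ • Matrix.of fun (i : Fin (k + 1)) (j : Fin k) => if (i : ℕ) = (j : ℕ) then 1 else 0) :
    (QstarMat q δ k * (QstarMat q δ k)ᴴ = 1 ∧ (QstarMat q δ k)ᴴ * QstarMat q δ k = 1) ∧
    (∀ j : Fin k, (QstarMat q δ k * M) ⟨k, Nat.lt_succ_self k⟩ j = 0) ∧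
    (∀ (i : Fin (k + 1)) (j : Fin k), (j : ℕ) < (i : ℕ) → (QstarMat q δ k * M) i j = 0) ∧
    (∀ j : Fin k,
      (QstarMat q δ k * M) (Fin.castSucc j) j =
        H ⟨(j : ℕ) + 1, Nat.lt_of_le_of_lt (Nat.succ_le_of_lt j.isLt) hkN⟩
            ⟨(j : ℕ), Nat.lt_trans j.isLt hkN⟩ *
          ((sigmaP q δ ((j : ℕ) + 1) / sigmaP q δ (j : ℕ) : ℝ) : ℂ) ∧
      0 < ((QstarMat q δ k * M) (Fin.castSucc j) j).re ∧
      ((QstarMat q δ k * M) (Fin.castSucc j) j).im = 0) :=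
  stmt3_general N H hHess hsub q hq0 hqrec δ k hkN M hM
end

section
/- Fix δ ∈ ℂ and 2 ≤ k ≤ N−1. Then Q_{k+1}(δ)^* = Ω_{k+1}(δ)·diag(Q_k(δ)^*, 1), where Ω_{k+1}(δ) ∈ ℂ^{(k+1)×(k+1)} is the Givens rotation equal to the identity except for the 2×2 block in rows and columns k, k+1, which equals [[conj(c_k(δ)), s_k(δ)], [−s_k(δ), c_k(δ)]] with s_k(δ) = σ_{k−1}(δ)/σ_k(δ) and c_k(δ) = (−1)^k q_k(δ)/σ_k(δ). In particular s_k(δ) ≥ 0 and s_k(δ)² + |c_k(δ)|² = 1. -/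
/-
The rotation `Ω_{k+1}` is the identity outside rows `k - 1, k`, so the rows of
`Ω_{k+1} · diag(Q_k^*, 1)` above `k - 1` are those of `Q_k^*`, which agree with those of
`Q_{k+1}^*`. Row `k - 1` is `conj c_k` times the last row `(-1)^(k-1) q_j / σ_{k-1}` of `Q_k^*`,
plus `s_k` in the new column; row `k` is `-s_k` times that same row plus `c_k` in the new column.
Both reduce to the defining entries of `Q_{k+1}^*` once `σ_{k-1} ≠ 0` (as `q_0 = 1`) is
cancelled. Finally `s_k² + |c_k|² = (σ_{k-1}² + |q_k|²) / σ_k² = 1`.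
-/

open Polynomial Matrix Finset

namespace Matrix

variable {l m n α : Type*} [Fintype m] [DecidableEq m] {A : Matrix l m α} {i : l} {p r : m}

lemma mul_apply_of_row_eq_single_one [NonAssocSemiring α] (h : A i = Pi.single p 1)
    (B : Matrix m n α) (j : n) : (A * B) i j = B p j := by
  rw [mul_apply_eq_vecMul, h, single_one_vecMul]
  rfl

lemma mul_apply_of_row_eq_single_add_single [NonUnitalNonAssocSemiring α] {a b : α}
    (h : A i = Pi.single p a + Pi.single r b) (B : Matrix m n α) (j : n) :
    (A * B) i j = a * B p j + b * B r j := by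
  rw [mul_apply_eq_vecMul, h, add_vecMul, single_vecMul, single_vecMul]
  rfl

end Matrix

section Sigma

variable (q : ℕ → Polynomial ℂ) (δ : ℂ)

lemma sigmaP_pos (hq0 : q 0 = 1) (m : ℕ) : 0 < sigmaP q δ m :=
  Real.sqrt_pos.mpr <| Finset.sum_pos' (fun _ _ => by positivity)
    ⟨0, Finset.mem_range.mpr m.succ_pos, by simp [hq0]⟩

lemma sigmaP_succ_sq (m : ℕ) :
    sigmaP q δ (m + 1) ^ 2 = sigmaP q δ m ^ 2 + ‖(q (m + 1)).eval δ‖ ^ 2 := by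
  rw [sigmaP, sigmaP, Real.sq_sqrt (by positivity), Real.sq_sqrt (by positivity),
    Finset.sum_range_succ _ (m + 1)]

lemma sq_add_norm_sq_eq_one (hq0 : q 0 = 1) (m : ℕ) :
    (sigmaP q δ m / sigmaP q δ (m + 1)) ^ 2 +
      ‖(-1 : ℂ) ^ (m + 1) * (q (m + 1)).eval δ / (sigmaP q δ (m + 1) : ℂ)‖ ^ 2 = 1 := by
  have hσ := (sigmaP_pos q δ hq0 (m + 1)).ne'
  rw [norm_div, norm_mul, norm_pow, norm_neg, norm_one, one_pow, one_mul, Complex.norm_real,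
    Real.norm_eq_abs, abs_of_pos (sigmaP_pos q δ hq0 (m + 1)), div_pow, div_pow, ← add_div,
    ← sigmaP_succ_sq, div_self (pow_ne_zero 2 hσ)]

end Sigma

/-- The Givens rotation `Ω_{k+1}`, acting in the (`0`-based) rows and columns `k - 1, k`. -/
def givensRotation (k : ℕ) (c : ℂ) (s : ℝ) : Matrix (Fin (k + 1)) (Fin (k + 1)) ℂ :=
  Matrix.of fun (i j : Fin (k + 1)) =>
    if (i : ℕ) = k - 1 ∧ (j : ℕ) = k - 1 then (starRingEnd ℂ) c
    else if (i : ℕ) = k - 1 ∧ (j : ℕ) = k then (s : ℂ)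
    else if (i : ℕ) = k ∧ (j : ℕ) = k - 1 then -(s : ℂ)
    else if (i : ℕ) = k ∧ (j : ℕ) = k then c
    else if (i : ℕ) = (j : ℕ) then 1 else 0

/-- `diag(Q_k(δ)^*, 1)`, where `Q_k(δ)^*` is `QstarMat q δ (k - 1)`. -/
noncomputable def QstarMatDiagOne (q : ℕ → Polynomial ℂ) (δ : ℂ) (k : ℕ) :
    Matrix (Fin (k + 1)) (Fin (k + 1)) ℂ :=
  Matrix.of fun (i j : Fin (k + 1)) =>
    if hi : (i : ℕ) < k then
      if hj : (j : ℕ) < k then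
        QstarMat q δ (k - 1) ⟨(i : ℕ), by omega⟩ ⟨(j : ℕ), by omega⟩
      else 0
    else if (j : ℕ) < k then 0 else 1

section Givens

variable {m : ℕ} (c : ℂ) (s : ℝ)

lemma givensRotation_castSucc_castSucc (i : Fin m) :
    givensRotation (m + 1) c s i.castSucc.castSucc = Pi.single i.castSucc.castSucc 1 := by
  ext j
  simp only [givensRotation, of_apply, Pi.single_apply, Fin.ext_iff, Fin.val_castSucc,
    Nat.add_sub_cancel]
  split_ifs <;> first | rfl | omega

lemma givensRotation_castSucc_last :
    givensRotation (m + 1) c s (Fin.last m).castSucc =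
      Pi.single (Fin.last m).castSucc ((starRingEnd ℂ) c) +
        Pi.single (Fin.last (m + 1)) (s : ℂ) := by
  ext j
  simp only [givensRotation, of_apply, Pi.add_apply, Pi.single_apply, Fin.ext_iff,
    Fin.val_castSucc, Nat.add_sub_cancel, Fin.val_last, true_and]
  split_ifs <;> first | omega | simp

lemma givensRotation_last :
    givensRotation (m + 1) c s (Fin.last (m + 1)) =
      Pi.single (Fin.last m).castSucc (-(s : ℂ)) + Pi.single (Fin.last (m + 1)) c := by
  ext j
  simp only [givensRotation, of_apply, Pi.add_apply, Pi.single_apply, Fin.ext_iff,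
    Fin.val_castSucc, Nat.add_sub_cancel, Fin.val_last, true_and]
  split_ifs <;> first | omega | simp

end Givens

section Entries

variable (q : ℕ → Polynomial ℂ) (δ : ℂ) {m : ℕ}

lemma QstarMatDiagOne_castSucc_castSucc (i j : Fin (m + 1)) :
    QstarMatDiagOne q δ (m + 1) i.castSucc j.castSucc = QstarMat q δ m i j := by
  simp only [QstarMatDiagOne, of_apply, Fin.val_castSucc]
  split_ifs <;> first | rfl | omega

lemma QstarMatDiagOne_castSucc_last (i : Fin (m + 1)) :
    QstarMatDiagOne q δ (m + 1) i.castSucc (Fin.last (m + 1)) = 0 := by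
  simp only [QstarMatDiagOne, of_apply, Fin.val_castSucc, Fin.val_last]
  split_ifs <;> first | rfl | omega

lemma QstarMatDiagOne_last_castSucc (j : Fin (m + 1)) :
    QstarMatDiagOne q δ (m + 1) (Fin.last (m + 1)) j.castSucc = 0 := by
  simp only [QstarMatDiagOne, of_apply, Fin.val_castSucc, Fin.val_last]
  split_ifs <;> first | rfl | omega

lemma QstarMatDiagOne_last_last :
    QstarMatDiagOne q δ (m + 1) (Fin.last (m + 1)) (Fin.last (m + 1)) = 1 := by
  simp only [QstarMatDiagOne, of_apply, Fin.val_last]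
  split_ifs <;> first | rfl | omega

lemma QstarMat_last (j : Fin (m + 1)) :
    QstarMat q δ m (Fin.last m) j = (-1 : ℂ) ^ m * (q j).eval δ / (sigmaP q δ m : ℂ) := by
  simp [QstarMat]

lemma QstarMat_castSucc_castSucc (i : Fin m) (j : Fin (m + 1)) :
    QstarMat q δ (m + 1) i.castSucc.castSucc j.castSucc = QstarMat q δ m i.castSucc j := by
  simp only [QstarMat, of_apply, Fin.val_castSucc]
  split_ifs <;> first | rfl | omega

lemma QstarMat_castSucc_castSucc_last (i : Fin m) :
    QstarMat q δ (m + 1) i.castSucc.castSucc (Fin.last (m + 1)) = 0 := by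
  simp only [QstarMat, of_apply, Fin.val_castSucc, Fin.val_last]
  split_ifs <;> first | rfl | omega

lemma QstarMat_castSucc_last_castSucc (j : Fin (m + 1)) :
    QstarMat q δ (m + 1) (Fin.last m).castSucc j.castSucc =
      -((q j).eval δ * (starRingEnd ℂ) ((q (m + 1)).eval δ)) /
        ((sigmaP q δ (m + 1) : ℂ) * (sigmaP q δ m : ℂ)) := by
  simp only [QstarMat, of_apply, Fin.val_castSucc, Fin.val_last]
  split_ifs <;> first | rfl | omega

lemma QstarMat_castSucc_last_last :
    QstarMat q δ (m + 1) (Fin.last m).castSucc (Fin.last (m + 1)) =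
      ((sigmaP q δ m / sigmaP q δ (m + 1) : ℝ) : ℂ) := by
  simp only [QstarMat, of_apply, Fin.val_castSucc, Fin.val_last]
  split_ifs <;> first | rfl | omega

end Entries

theorem QstarMat_succ_eq_givensRotation_mul (q : ℕ → Polynomial ℂ) (δ : ℂ) (hq0 : q 0 = 1)
    (m : ℕ) :
    QstarMat q δ (m + 1) =
      givensRotation (m + 1)
          ((-1 : ℂ) ^ (m + 1) * (q (m + 1)).eval δ / (sigmaP q δ (m + 1) : ℂ))
          (sigmaP q δ m / sigmaP q δ (m + 1)) *
        QstarMatDiagOne q δ (m + 1) := by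
  have hσm := Complex.ofReal_ne_zero.mpr (sigmaP_pos q δ hq0 m).ne'
  have hσm1 := Complex.ofReal_ne_zero.mpr (sigmaP_pos q δ hq0 (m + 1)).ne'
  ext i j
  induction i using Fin.lastCases with
  | last =>
    rw [mul_apply_of_row_eq_single_add_single (givensRotation_last _ _)]
    induction j using Fin.lastCases with
    | last =>
      rw [QstarMat_last, QstarMatDiagOne_castSucc_last, QstarMatDiagOne_last_last, Fin.val_last]
      ring
    | cast j =>
      rw [QstarMat_last, QstarMatDiagOne_castSucc_castSucc, QstarMat_last,
        QstarMatDiagOne_last_castSucc, Fin.val_castSucc]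
      push_cast
      field_simp
      ring
  | cast i =>
    induction i using Fin.lastCases with
    | last =>
      rw [mul_apply_of_row_eq_single_add_single (givensRotation_castSucc_last _ _)]
      induction j using Fin.lastCases with
      | last =>
        rw [QstarMat_castSucc_last_last, QstarMatDiagOne_castSucc_last,
          QstarMatDiagOne_last_last]
        ring
      | cast j =>
        have hsign : (-1 : ℂ) ^ (m + 1) * (-1) ^ m = -1 := by
          rw [← pow_add]
          exact Odd.neg_one_pow ⟨m, by ring⟩
        rw [QstarMat_castSucc_last_castSucc, QstarMatDiagOne_castSucc_castSucc, QstarMat_last,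
          QstarMatDiagOne_last_castSucc]
        simp only [map_div₀, map_mul, map_pow, map_neg, map_one, Complex.conj_ofReal]
        field_simp
        linear_combination (-(q j).eval δ * (starRingEnd ℂ) ((q (m + 1)).eval δ)) * hsign
    | cast i =>
      rw [mul_apply_of_row_eq_single_one (givensRotation_castSucc_castSucc _ _ _)]
      induction j using Fin.lastCases with
      | last => rw [QstarMat_castSucc_castSucc_last, QstarMatDiagOne_castSucc_last]
      | cast j => rw [QstarMat_castSucc_castSucc, QstarMatDiagOne_castSucc_castSucc]

theorem stmt4 (q : ℕ → Polynomial ℂ) (hq0 : q 0 = 1)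
    (δ : ℂ) (k : ℕ) (hk2 : 2 ≤ k)
    (s : ℝ) (hs : s = sigmaP q δ (k - 1) / sigmaP q δ k)
    (c : ℂ) (hc : c = (-1 : ℂ) ^ k * (q k).eval δ / (sigmaP q δ k : ℂ))
    (Ω : Matrix (Fin (k + 1)) (Fin (k + 1)) ℂ)
    (hΩ : Ω = Matrix.of fun (i j : Fin (k + 1)) =>
      if (i : ℕ) = k - 1 ∧ (j : ℕ) = k - 1 then (starRingEnd ℂ) c
      else if (i : ℕ) = k - 1 ∧ (j : ℕ) = k then (s : ℂ)
      else if (i : ℕ) = k ∧ (j : ℕ) = k - 1 then -(s : ℂ)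
      else if (i : ℕ) = k ∧ (j : ℕ) = k then c
      else if (i : ℕ) = (j : ℕ) then 1 else 0)
    (D : Matrix (Fin (k + 1)) (Fin (k + 1)) ℂ)
    (hD : D = Matrix.of fun (i j : Fin (k + 1)) =>
      if hi : (i : ℕ) < k then
        if hj : (j : ℕ) < k then
          QstarMat q δ (k - 1) ⟨(i : ℕ), by omega⟩ ⟨(j : ℕ), by omega⟩
        else 0
      else if (j : ℕ) < k then 0 else 1) :
    QstarMat q δ k = Ω * D ∧ 0 ≤ s ∧ s ^ 2 + ‖c‖ ^ 2 = 1 := by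
  obtain ⟨m, rfl⟩ : ∃ m, k = m + 1 := ⟨k - 1, by omega⟩
  rw [Nat.add_sub_cancel] at hs
  subst hs hc hΩ hD
  exact ⟨QstarMat_succ_eq_givensRotation_mul q δ hq0 m,
    div_nonneg (sigmaP_pos q δ hq0 m).le (sigmaP_pos q δ hq0 (m + 1)).le,
    sq_add_norm_sq_eq_one q δ hq0 m⟩
end

section
/- Fix δ ∈ ℂ and 0 ≤ k ≤ N−1, and suppose H_{k+1} − δ·I_{k+1} is invertible. Set B := ((H_{k+1} − δ·I_{k+1})^{−1})^* (the conjugate transpose of the inverse). Then B is (0,1)-upper-separable: for every 1 ≤ j ≤ k+1, the submatrix of B formed by rows 1, …, j and columns j, …, k+1 has rank at most 1. Moreover, for 1 ≤ m ≤ k+1 and 1 ≤ ℓ ≤ k−m+2, the submatrix H̃ of B formed by the first m rows and the last ℓ columns satisfies ‖H̃‖ ≤ ‖(H_{k+1} − δ·I_{k+1})^{−1}‖ · σ_{m−1}(δ)/σ_{k−ℓ+1}(δ), where ‖·‖ denotes the spectral norm. -/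
open Polynomial Matrix Finset

/-- The spectral (ℓ²-operator) norm of a complex matrix. -/
noncomputable def specNorm {m n : ℕ} (M : Matrix (Fin m) (Fin n) ℂ) : ℝ :=
  ‖LinearMap.toContinuousLinearMap (Matrix.toEuclideanLin M)‖

open scoped Matrix.Norms.L2Operator

namespace Matrix

section L2OpNorm

variable {𝕜 l m n p : Type*} [RCLike 𝕜] [Fintype l] [Fintype m] [Fintype n] [Fintype p]

lemma l2_opNorm_vecMulVec [DecidableEq n] (x : m → 𝕜) (y : n → 𝕜) :
    ‖vecMulVec x y‖ = ‖WithLp.toLp 2 x‖ * ‖WithLp.toLp 2 y‖ := by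
  have hy : ‖WithLp.toLp 2 (star y)‖ = ‖WithLp.toLp 2 y‖ := by
    simp [EuclideanSpace.norm_eq]
  have h := InnerProductSpace.symm_toEuclideanLin_rankOne (WithLp.toLp 2 x)
    (WithLp.toLp 2 (star y))
  rw [star_star] at h
  rw [← hy, ← InnerProductSpace.norm_rankOne (𝕜 := 𝕜), ← h, l2_opNorm_def,
    LinearEquiv.trans_apply, LinearEquiv.apply_symm_apply]
  rfl

lemma l2_opNorm_le_one_of_conjTranspose_mul_self_eq_one [DecidableEq n] {A : Matrix m n 𝕜}
    (h : Aᴴ * A = 1) : ‖A‖ ≤ 1 := by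
  have h1 : ‖(1 : Matrix n n 𝕜)‖ ≤ 1 := by
    rw [← diagonal_one, l2_opNorm_diagonal]
    exact pi_norm_const_le 1 |>.trans norm_one.le
  have : ‖A‖ * ‖A‖ ≤ 1 := by rw [← l2_opNorm_conjTranspose_mul_self, h]; exact h1
  nlinarith [norm_nonneg A]

lemma l2_opNorm_submatrix_le [DecidableEq l] [DecidableEq m] [DecidableEq n] [DecidableEq p]
    (A : Matrix m n 𝕜) {r : l → m} {c : p → n} (hr : Function.Injective r)
    (hc : Function.Injective c) : ‖A.submatrix r c‖ ≤ ‖A‖ := by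
  set P : Matrix l m 𝕜 := (1 : Matrix m m 𝕜).submatrix r id
  set Q : Matrix n p 𝕜 := (1 : Matrix n n 𝕜).submatrix id c
  have hPQ : A.submatrix r c = P * A * Q := by
    ext; simp [P, Q, mul_apply, one_apply]
  have hP : ‖P‖ ≤ 1 := by
    rw [← l2_opNorm_conjTranspose]
    refine l2_opNorm_le_one_of_conjTranspose_mul_self_eq_one ?_
    ext; simp [P, mul_apply, one_apply, hr.eq_iff]
  have hQ : ‖Q‖ ≤ 1 := by
    refine l2_opNorm_le_one_of_conjTranspose_mul_self_eq_one ?_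
    ext; simp [Q, mul_apply, one_apply, hc.eq_iff]
  calc ‖A.submatrix r c‖ ≤ ‖P‖ * ‖A‖ * ‖Q‖ := by
        rw [hPQ]; exact (l2_opNorm_mul _ _).trans (by gcongr; exact l2_opNorm_mul _ _)
    _ ≤ 1 * ‖A‖ * 1 := by gcongr
    _ = ‖A‖ := by ring

end L2OpNorm

structure IsUnreducedHessenberg {K : Type*} [Zero K] {n : ℕ}
    (A : Matrix (Fin (n + 1)) (Fin (n + 1)) K) : Prop where
  apply_eq_zero : ∀ i j : Fin (n + 1), (j : ℕ) + 1 < i → A i j = 0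
  subdiag_ne_zero : ∀ j : Fin n, A j.succ j.castSucc ≠ 0

namespace IsUnreducedHessenberg

variable {K : Type*} [Field K] {n : ℕ} {A : Matrix (Fin (n + 1)) (Fin (n + 1)) K}

theorem apply_eq_zero_of_vecMul (hA : A.IsUnreducedHessenberg) {r : Fin (n + 1) → K}
    (hr0 : r 0 = 0) {p : Fin (n + 1)} (hr : ∀ t < p, (r ᵥ* A) t = 0) : ∀ t ≤ p, r t = 0 := by
  suffices h : ∀ t : Fin (n + 1), t ≤ p → ∀ s ≤ t, r s = 0 from fun t ht => h t ht t le_rfl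
  intro t
  induction t using Fin.induction with
  | zero => intro _ s hs; rwa [nonpos_iff_eq_zero.mp hs]
  | succ i ih =>
    intro hi s hs
    have hprev : ∀ s ≤ i.castSucc, r s = 0 := ih (Fin.castSucc_lt_succ.le.trans hi)
    rcases hs.lt_or_eq with hs | rfl
    · exact hprev s (Fin.le_castSucc_iff.mpr hs)
    -- column `i` of `A` vanishes below row `i + 1`, and `r` vanishes up to index `i`
    have hcol : r i.succ * A i.succ i.castSucc = 0 := by
      rw [← hr _ (Fin.castSucc_lt_succ.trans_le hi), vecMul, dotProduct,
        Finset.sum_eq_single i.succ]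
      · intro u _ hu
        rcases le_or_gt u i.castSucc with hle | hgt
        · rw [hprev u hle, zero_mul]
        · rw [hA.apply_eq_zero u i.castSucc (by
            have : (i : ℕ) + 1 ≠ u := fun h => hu (Fin.ext (by simp [← h]))
            simp only [Fin.lt_def, Fin.val_castSucc] at hgt ⊢; omega), mul_zero]
      · simp
    exact (mul_eq_zero.mp hcol).resolve_right (hA.subdiag_ne_zero i)

theorem apply_eq_mul_of_mul_eq_one (hA : A.IsUnreducedHessenberg)
    {E : Matrix (Fin (n + 1)) (Fin (n + 1)) K} (hE : E * A = 1) {v : Fin (n + 1) → K}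
    (hv0 : v 0 = 1) (hv : ∀ t < Fin.last n, (v ᵥ* A) t = 0) {i j : Fin (n + 1)} (hji : j ≤ i) :
    E i j = E i 0 * v j := by
  have hrow : ∀ t < i, ((E i - E i 0 • v) ᵥ* A) t = 0 := by
    intro t ht
    rw [sub_vecMul, smul_vecMul, Pi.sub_apply, Pi.smul_apply, hv t (ht.trans_le (Fin.le_last i)),
      smul_zero, sub_zero]
    exact (congrFun (congrFun hE i) t).trans (one_apply_ne ht.ne')
  simpa [sub_eq_zero] using hA.apply_eq_zero_of_vecMul (by simp [hv0]) hrow j hji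

theorem submatrix_castLE_eq_vecMulVec_of_mul_eq_one (hA : A.IsUnreducedHessenberg)
    {E : Matrix (Fin (n + 1)) (Fin (n + 1)) K} (hE : E * A = 1) {v : Fin (n + 1) → K}
    (hv0 : v 0 = 1) (hv : ∀ t < Fin.last n, (v ᵥ* A) t = 0) {a p : ℕ} (r : Fin a → Fin (n + 1))
    (hp : p ≤ n + 1) (hr : ∀ t, p ≤ (r t : ℕ) + 1) :
    E.submatrix r (Fin.castLE hp) = vecMulVec (fun t => E (r t) 0) (v ∘ Fin.castLE hp) := by
  ext t s
  exact hA.apply_eq_mul_of_mul_eq_one hE hv0 hv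
    (by have := hr t; simp only [Fin.le_def, Fin.val_castLE]; omega)

end IsUnreducedHessenberg

end Matrix

section LeadingSubmatrix

variable {K : Type*} [CommRing K] {N k : ℕ} {H : Matrix (Fin N) (Fin N) K}

lemma isUnreducedHessenberg_submatrix_castLE_sub_smul_one
    (hHess : ∀ i j : Fin N, (j : ℕ) + 1 < (i : ℕ) → H i j = 0)
    (hsub : ∀ (j : ℕ) (hj : j + 1 < N), H ⟨j + 1, hj⟩ ⟨j, Nat.lt_of_succ_lt hj⟩ ≠ 0)
    (hkN : k < N) (δ : K) :
    (H.submatrix (Fin.castLE hkN) (Fin.castLE hkN) - δ • 1).IsUnreducedHessenberg := by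
  have hoff : ∀ i j : Fin (k + 1), i ≠ j →
      (H.submatrix (Fin.castLE hkN) (Fin.castLE hkN) - δ • 1) i j =
        H (Fin.castLE hkN i) (Fin.castLE hkN j) := by
    intro i j hij
    simp [one_apply_ne hij]
  refine ⟨fun i j hij => ?_, fun j => ?_⟩
  · rw [hoff i j (by rintro rfl; omega)]
    exact hHess _ _ hij
  · rw [hoff _ _ Fin.castSucc_lt_succ.ne']
    exact hsub j (by omega)

theorem vecMul_eval_submatrix_castLE_sub_smul_one_eq_zero
    (hHess : ∀ i j : Fin N, (j : ℕ) + 1 < (i : ℕ) → H i j = 0)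
    {q : ℕ → Polynomial K}
    (hqrec : ∀ (k : ℕ) (hk : k + 1 < N),
      Polynomial.C (H ⟨k + 1, hk⟩ ⟨k, Nat.lt_of_succ_lt hk⟩) * q (k + 1) =
        Polynomial.X * q k -
          ∑ j : Fin (k + 1),
            Polynomial.C (H ⟨(j : ℕ), Nat.lt_trans j.isLt hk⟩ ⟨k, Nat.lt_of_succ_lt hk⟩) *
              q (j : ℕ))
    (δ : K) (hkN : k < N) {c : Fin (k + 1)} (hc : c < Fin.last k) :
    ((fun t : Fin (k + 1) => (q t).eval δ) ᵥ*
      (H.submatrix (Fin.castLE hkN) (Fin.castLE hkN) - δ • 1)) c = 0 := by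
  have hcN : (c : ℕ) + 1 < N := by rw [Fin.lt_def, Fin.val_last] at hc; omega
  -- `f t = q_t(δ) H_{t,c}`, extended by zero so that sums over `Fin (c + 1)` and `Fin (k + 1)`
  -- can be compared as sums over `range`
  let f : ℕ → K := fun t => (q t).eval δ *
    if ht : t < N then H ⟨t, ht⟩ ⟨c, Nat.lt_of_succ_lt hcN⟩ else 0
  have hrec := congrArg (eval δ) (hqrec c hcN)
  simp only [eval_mul, eval_C, eval_X, eval_sub, eval_finsetSum] at hrec
  have hsum : ∑ j : Fin (c + 1), H ⟨j, Nat.lt_trans j.isLt hcN⟩ ⟨c, Nat.lt_of_succ_lt hcN⟩ *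
      (q j).eval δ = ∑ t ∈ range (c + 1), f t := by
    rw [← Fin.sum_univ_eq_sum_range]
    refine sum_congr rfl fun j _ => ?_
    simp only [f, dif_pos (Nat.lt_trans j.isLt hcN), mul_comm]
  have hvec : ((fun t : Fin (k + 1) => (q t).eval δ) ᵥ*
      H.submatrix (Fin.castLE hkN) (Fin.castLE hkN)) c = ∑ t ∈ range (c + 2), f t := by
    calc _ = ∑ t : Fin (k + 1), f t :=
          sum_congr rfl fun t _ => by simp only [f, dif_pos (t.isLt.trans_le hkN)]; rfl
      _ = ∑ t ∈ range (k + 1), f t := Fin.sum_univ_eq_sum_range f (k + 1)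
      _ = ∑ t ∈ range (c + 2), f t := by
          refine (sum_subset (range_subset_range.mpr (by omega)) fun t ht hct => ?_).symm
          simp only [mem_range] at ht hct
          simp only [f, dif_pos (by omega : t < N)]
          rw [hHess _ _ (by simp only; omega), mul_zero]
  rw [vecMul_sub, vecMul_smul, vecMul_one, Pi.sub_apply, Pi.smul_apply, hvec, sum_range_succ,
    ← hsum]
  simp only [f, dif_pos hcN, smul_eq_mul]
  linear_combination hrec

end LeadingSubmatrix

lemma specNorm_eq_l2_opNorm {m n : ℕ} (M : Matrix (Fin m) (Fin n) ℂ) : specNorm M = ‖M‖ := rfl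

lemma sigmaP_eq_norm (q : ℕ → Polynomial ℂ) (δ : ℂ) {p m : ℕ} (h : p + 1 = m) :
    sigmaP q δ p = ‖WithLp.toLp 2 (fun t : Fin m => (q t).eval δ)‖ := by
  subst h
  rw [EuclideanSpace.norm_eq, sigmaP, ← Fin.sum_univ_eq_sum_range (fun t => ‖(q t).eval δ‖ ^ 2)]

lemma one_le_sigmaP {q : ℕ → Polynomial ℂ} (hq0 : q 0 = 1) (δ : ℂ) (p : ℕ) :
    1 ≤ sigmaP q δ p := by
  rw [sigmaP, Real.one_le_sqrt]
  calc (1 : ℝ) = ‖(q 0).eval δ‖ ^ 2 := by simp [hq0]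
    _ ≤ _ := single_le_sum (f := fun j => ‖(q j).eval δ‖ ^ 2) (fun _ _ => by positivity)
        (mem_range.mpr p.succ_pos)

/-- If `H_{k+1} - δ I` is invertible then `B := ((H_{k+1} - δ I)⁻¹)ᴴ` is
`(0,1)`-upper-separable, and the submatrix of its first `m` rows and last `ℓ` columns has
spectral norm at most `‖(H_{k+1} - δ I)⁻¹‖ · σ_{m-1}(δ)/σ_{k-ℓ+1}(δ)`. -/
theorem stmt6 (N : ℕ) (H : Matrix (Fin N) (Fin N) ℂ)
    (hHess : ∀ i j : Fin N, (j : ℕ) + 1 < (i : ℕ) → H i j = 0)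
    (hsub : ∀ (k : ℕ) (hk : k + 1 < N),
      0 < (H ⟨k + 1, hk⟩ ⟨k, Nat.lt_of_succ_lt hk⟩).re ∧
        (H ⟨k + 1, hk⟩ ⟨k, Nat.lt_of_succ_lt hk⟩).im = 0)
    (q : ℕ → Polynomial ℂ) (hq0 : q 0 = 1)
    (hqrec : ∀ (k : ℕ) (hk : k + 1 < N),
      Polynomial.C (H ⟨k + 1, hk⟩ ⟨k, Nat.lt_of_succ_lt hk⟩) * q (k + 1) =
        Polynomial.X * q k -
          ∑ j : Fin (k + 1),
            Polynomial.C (H ⟨(j : ℕ), Nat.lt_trans j.isLt hk⟩ ⟨k, Nat.lt_of_succ_lt hk⟩) *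
              q (j : ℕ))
    (δ : ℂ) (k : ℕ) (hkN : k < N)
    (Hk1 : Matrix (Fin (k + 1)) (Fin (k + 1)) ℂ)
    (hHk1 : Hk1 = H.submatrix (Fin.castLE hkN) (Fin.castLE hkN))
    (hinv : IsUnit (Hk1 - δ • 1))
    (B : Matrix (Fin (k + 1)) (Fin (k + 1)) ℂ) (hB : B = ((Hk1 - δ • 1)⁻¹)ᴴ) :
    (∀ (j : ℕ) (hj1 : 1 ≤ j) (hj : j ≤ k + 1),
      Matrix.rank
          (B.submatrix (Fin.castLE hj)
            (fun t : Fin (k + 1 + 1 - j) =>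
              (⟨j - 1 + (t : ℕ), by have := t.isLt; omega⟩ : Fin (k + 1)))) ≤ 1) ∧
    (∀ (m ℓ : ℕ) (hm1 : 1 ≤ m) (hm : m ≤ k + 1) (hℓ1 : 1 ≤ ℓ) (hℓ : ℓ + m ≤ k + 2),
      specNorm
          (B.submatrix (Fin.castLE hm)
            (fun t : Fin ℓ =>
              (⟨k + 1 - ℓ + (t : ℕ), by have := t.isLt; omega⟩ : Fin (k + 1)))) ≤
        specNorm ((Hk1 - δ • 1)⁻¹) * (sigmaP q δ (m - 1) / sigmaP q δ (k + 1 - ℓ))) := by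
  subst hHk1 hB
  set A := H.submatrix (Fin.castLE hkN) (Fin.castLE hkN) - δ • 1
  have hA : A.IsUnreducedHessenberg := isUnreducedHessenberg_submatrix_castLE_sub_smul_one hHess
    (fun j hj h0 => (hsub j hj).1.ne' ((congrArg Complex.re h0).trans Complex.zero_re)) hkN δ
  have hblock {a p : ℕ} := hA.submatrix_castLE_eq_vecMulVec_of_mul_eq_one (a := a) (p := p)
    (v := fun t => (q t).eval δ)
    (nonsing_inv_mul A ((isUnit_iff_isUnit_det A).mp hinv)) (by simp [hq0])
    (fun _ ht => vecMul_eval_submatrix_castLE_sub_smul_one_eq_zero hHess hqrec δ hkN ht)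
  refine ⟨fun j hj1 hj => ?_, fun m ℓ hm1 hm hℓ1 hℓ => ?_⟩
  · rw [← conjTranspose_submatrix, hblock _ hj (fun t => by simp; omega), conjTranspose_vecMulVec]
    exact rank_vecMulVec_le _ _
  · let rows : Fin ℓ → Fin (k + 1) := fun t => ⟨k + 1 - ℓ + t, by omega⟩
    have hrows : Function.Injective rows := fun s t h => by simpa [rows, Fin.ext_iff] using h
    have hσ := l2_opNorm_submatrix_le A⁻¹ hrows
      (Fin.castLE_injective (by omega : k + 2 - ℓ ≤ k + 1))
    rw [specNorm_eq_l2_opNorm, specNorm_eq_l2_opNorm, ← conjTranspose_submatrix,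
      l2_opNorm_conjTranspose, hblock rows hm (fun t => by simp [rows]; omega)]
    rw [hblock rows _ (fun t => by simp [rows]; omega)] at hσ
    simp only [l2_opNorm_vecMulVec, Function.comp_def, Fin.val_castLE] at hσ ⊢
    rw [← sigmaP_eq_norm q δ (by omega : k + 1 - ℓ + 1 = k + 2 - ℓ)] at hσ
    rw [← sigmaP_eq_norm q δ (by omega : m - 1 + 1 = m), mul_div_assoc',
      le_div_iff₀ (zero_lt_one.trans_le (one_le_sigmaP hq0 δ _)), mul_right_comm]
    exact mul_le_mul_of_nonneg_right hσ (Real.sqrt_nonneg _)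
end

section
/- For every δ ∈ ℂ and 0 ≤ k ≤ N−1, the normalized GMRES residual satisfies w_k(δ) = σ_k(δ)^{−1} · Σ_{j=0}^{k} conj(q_j(δ))·v_{j+1}. -/
/-!
Put `y = ∑_{j ≤ k} conj (q_j δ) • v_j`, so that `⟪y, v_i⟫ = q_i δ` for `i ≤ k`. Paired with `y`,
the Arnoldi relation for `v_j` becomes the recurrence defining `q_{j+1}`, so `y` is orthogonal to
`W = (A - δ)·span{v_1, …, v_k}`. Because the subdiagonal entries of `H` do not vanish, every
`v_i` with `i ≤ k` lies in `W + ℂ b`, and hence so does `y`. The residual `b - u_k` also lies in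
`W + ℂ b` and is orthogonal to `W`. Since `(W + ℂ b) ∩ Wᗮ` has dimension at most one, `b - u_k`
is a multiple of `y`, and the factor is `⟪y, b⟫ / ‖y‖² = ‖b‖ / ‖y‖² > 0`. Finally,
`‖y‖ = σ_k(δ)` by Pythagoras.
-/

open Polynomial Matrix Finset

/-- The standard inner product `x^* y` on `ℂ^n` (conjugate-linear in the first slot). -/
noncomputable def inn {n : ℕ} (x y : Fin n → ℂ) : ℂ := ∑ i, (starRingEnd ℂ) (x i) * y i

/-- The Euclidean norm on `ℂ^n`. -/
noncomputable def nrm {n : ℕ} (x : Fin n → ℂ) : ℝ := Real.sqrt (inn x x).re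

open WithLp
open scoped InnerProductSpace ComplexConjugate

section Krylov

variable {𝕜 E : Type*} [DivisionRing 𝕜] [AddCommGroup E] [Module 𝕜 E]

def shiftedKrylovImage (T : E → E) (v : ℕ → E) (δ : 𝕜) (k : ℕ) : Submodule 𝕜 E :=
  Submodule.span 𝕜 {x | ∃ j < k, x = T (v j) - δ • v j}

theorem mem_shiftedKrylovImage_sup_span_of_arnoldi {T : E → E} {v : ℕ → E} {h : ℕ → ℕ → 𝕜}
    {k : ℕ} (δ : 𝕜) (harn : ∀ j < k, T (v j) = ∑ i ∈ range (j + 2), h i j • v i)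
    (hsub : ∀ j < k, h (j + 1) j ≠ 0) :
    ∀ i ≤ k, v i ∈ shiftedKrylovImage T v δ k ⊔ 𝕜 ∙ v 0 := by
  intro i
  induction i using Nat.strong_induction_on with
  | _ i ih =>
    intro hik
    cases i with
    | zero => exact Submodule.mem_sup_right (Submodule.mem_span_singleton_self _)
    | succ j =>
      have hcomb : v (j + 1) = (h (j + 1) j)⁻¹ •
          ((T (v j) - δ • v j) + δ • v j - ∑ i ∈ range (j + 1), h i j • v i) := by
        rw [sub_add_cancel, harn j (by omega), sum_range_succ, add_sub_cancel_left, smul_smul,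
          inv_mul_cancel₀ (hsub j (by omega)), one_smul]
      rw [hcomb]
      refine Submodule.smul_mem _ _ (sub_mem (add_mem ?_ ?_) (sum_mem fun i hi => ?_))
      · exact Submodule.mem_sup_left (Submodule.subset_span ⟨j, by omega, rfl⟩)
      · exact Submodule.smul_mem _ _ (ih j (by omega) (by omega))
      · have hij : i < j + 1 := mem_range.mp hi
        exact Submodule.smul_mem _ _ (ih i (by omega) (by omega))

end Krylov

section InnerProductSpace

variable {𝕜 E : Type*} [RCLike 𝕜] [NormedAddCommGroup E] [InnerProductSpace 𝕜 E]

theorem inner_sum_smul_left_of_orthonormalOn {ι : Type*} [DecidableEq ι] {v : ι → E}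
    {s : Finset ι} (hv : ∀ i ∈ s, ∀ j ∈ s, ⟪v i, v j⟫_𝕜 = if i = j then 1 else 0) (c : ι → 𝕜)
    {i : ι} (hi : i ∈ s) : ⟪∑ j ∈ s, c j • v j, v i⟫_𝕜 = conj (c i) := by
  have hoff : ∀ j ∈ s, j ≠ i → ⟪c j • v j, v i⟫_𝕜 = 0 := fun j hj hji => by
    rw [inner_smul_left, hv j hj i hi, if_neg hji, mul_zero]
  rw [sum_inner, sum_eq_single i hoff (absurd hi), inner_smul_left, hv i hi i hi, if_pos rfl,
    mul_one]

theorem norm_sum_smul_sq_of_orthonormalOn {ι : Type*} [DecidableEq ι] {v : ι → E}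
    {s : Finset ι} (hv : ∀ i ∈ s, ∀ j ∈ s, ⟪v i, v j⟫_𝕜 = if i = j then 1 else 0) (c : ι → 𝕜) :
    ‖∑ j ∈ s, c j • v j‖ ^ 2 = ∑ j ∈ s, ‖c j‖ ^ 2 := by
  have h : ((‖∑ j ∈ s, c j • v j‖ ^ 2 : ℝ) : 𝕜) = ((∑ j ∈ s, ‖c j‖ ^ 2 : ℝ) : 𝕜) := by
    rw [RCLike.ofReal_pow, ← inner_self_eq_norm_sq_to_K, inner_sum, RCLike.ofReal_sum]
    refine sum_congr rfl fun j hj => ?_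
    rw [inner_smul_right, inner_sum_smul_left_of_orthonormalOn hv c hj, RCLike.mul_conj,
      RCLike.ofReal_pow]
  exact_mod_cast h

theorem inv_norm_smul_ofReal_smul {c : ℝ} (hc : 0 < c) (y : E) :
    ((‖(c : 𝕜) • y‖⁻¹ : ℝ) : 𝕜) • (c : 𝕜) • y = ((‖y‖⁻¹ : ℝ) : 𝕜) • y := by
  rw [norm_smul, RCLike.norm_ofReal, abs_of_pos hc, smul_smul, ← RCLike.ofReal_mul,
    _root_.mul_inv_rev, inv_mul_cancel_right₀ hc.ne']

theorem inner_self_smul_sub_eq_of_mem_sup_span {K : Submodule 𝕜 E} {b u y : E} (hu : u ∈ K)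
    (hr : b - u ∈ Kᗮ) (hy : y ∈ K ⊔ 𝕜 ∙ b) (hyK : y ∈ Kᗮ) :
    ⟪y, y⟫_𝕜 • (b - u) = ⟪y, b⟫_𝕜 • y := by
  obtain ⟨s, hs, z, hz, rfl⟩ := Submodule.mem_sup.mp hy
  obtain ⟨t, rfl⟩ := Submodule.mem_span_singleton.mp hz
  have hyb : ⟪s + t • b, b⟫_𝕜 = ⟪s + t • b, b - u⟫_𝕜 := by
    rw [inner_sub_right, K.inner_left_of_mem_orthogonal hu hyK, sub_zero]
  -- `t • (b - u)` and `s + t • b` differ by an element of `K` and are both orthogonal to `K`.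
  have hyr : s + t • b = t • (b - u) := by
    refine (sub_eq_zero.mp (Submodule.disjoint_def.mp K.orthogonal_disjoint _ ?_ ?_)).symm
    · convert neg_mem (K.add_mem (K.smul_mem t hu) hs) using 1; module
    · exact sub_mem (Kᗮ.smul_mem t hr) hyK
  rw [hyb, hyr, inner_smul_right, smul_smul, mul_comm]

end InnerProductSpace

section Arnoldi

variable {𝕜 E : Type*} [RCLike 𝕜] [NormedAddCommGroup E] [InnerProductSpace 𝕜 E]
  {T : E → E} {v : ℕ → E} {h : ℕ → ℕ → 𝕜} {Q : ℕ → 𝕜} {δ : 𝕜} {k : ℕ}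

theorem inner_sum_conj_smul_eq (hv : ∀ i ∈ range (k + 1), ∀ j ∈ range (k + 1),
      ⟪v i, v j⟫_𝕜 = if i = j then 1 else 0) {i : ℕ} (hi : i ≤ k) :
    ⟪∑ j ∈ range (k + 1), conj (Q j) • v j, v i⟫_𝕜 = Q i := by
  rw [inner_sum_smul_left_of_orthonormalOn hv _ (mem_range.mpr (by omega)), RCLike.conj_conj]

theorem sum_conj_smul_mem_orthogonal_shiftedKrylovImage
    (hv : ∀ i ∈ range (k + 1), ∀ j ∈ range (k + 1), ⟪v i, v j⟫_𝕜 = if i = j then 1 else 0)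
    (harn : ∀ j < k, T (v j) = ∑ i ∈ range (j + 2), h i j • v i)
    (hrec : ∀ j < k, ∑ i ∈ range (j + 2), h i j * Q i = δ * Q j) :
    ∑ j ∈ range (k + 1), conj (Q j) • v j ∈ (shiftedKrylovImage T v δ k)ᗮ := by
  rw [Submodule.mem_orthogonal']
  intro x hx
  refine Submodule.mem_orthogonal_singleton_iff_inner_right.mp (Submodule.span_le.mpr ?_ hx)
  rintro _ ⟨j, hj, rfl⟩
  rw [SetLike.mem_coe, Submodule.mem_orthogonal_singleton_iff_inner_right, inner_sub_right,
    harn j hj, inner_sum, inner_smul_right, inner_sum_conj_smul_eq hv hj.le, ← hrec j hj]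
  refine sub_eq_zero.mpr (sum_congr rfl fun i hi => ?_)
  have hij : i < j + 2 := mem_range.mp hi
  rw [inner_smul_right, inner_sum_conj_smul_eq hv (by omega)]

theorem inv_norm_smul_sub_eq_of_arnoldi {b u : E} (hb : b ≠ 0)
    (hv : ∀ i ∈ range (k + 1), ∀ j ∈ range (k + 1), ⟪v i, v j⟫_𝕜 = if i = j then 1 else 0)
    (hv0 : v 0 = ((‖b‖⁻¹ : ℝ) : 𝕜) • b)
    (harn : ∀ j < k, T (v j) = ∑ i ∈ range (j + 2), h i j • v i)
    (hsub : ∀ j < k, h (j + 1) j ≠ 0) (hQ0 : Q 0 = 1)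
    (hrec : ∀ j < k, ∑ i ∈ range (j + 2), h i j * Q i = δ * Q j)
    (hu : u ∈ shiftedKrylovImage T v δ k) (hr : b - u ∈ (shiftedKrylovImage T v δ k)ᗮ) :
    ((‖b - u‖⁻¹ : ℝ) : 𝕜) • (b - u) =
      (((√(∑ j ∈ range (k + 1), ‖Q j‖ ^ 2))⁻¹ : ℝ) : 𝕜) •
        ∑ j ∈ range (k + 1), conj (Q j) • v j := by
  set y := ∑ j ∈ range (k + 1), conj (Q j) • v j
  have hbv : b = ((‖b‖ : ℝ) : 𝕜) • v 0 := by
    rw [hv0, smul_smul, ← RCLike.ofReal_mul, mul_inv_cancel₀ (norm_ne_zero_iff.mpr hb),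
      RCLike.ofReal_one, one_smul]
  have hyb : ⟪y, b⟫_𝕜 = ‖b‖ := by
    conv_lhs => rw [hbv]
    rw [inner_smul_right, inner_sum_conj_smul_eq hv k.zero_le, hQ0, mul_one]
  have hy : ‖y‖ ^ 2 = ∑ j ∈ range (k + 1), ‖Q j‖ ^ 2 := by
    simp only [y, norm_sum_smul_sq_of_orthonormalOn hv, RCLike.norm_conj]
  have hy1 : 1 ≤ ‖y‖ ^ 2 := by
    simpa [hy, hQ0] using single_le_sum (fun j _ => sq_nonneg ‖Q j‖) (mem_range.mpr k.succ_pos)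
  have hyM : y ∈ shiftedKrylovImage T v δ k ⊔ 𝕜 ∙ b := by
    have hv0b : 𝕜 ∙ v 0 ≤ 𝕜 ∙ b := (Submodule.span_singleton_le_iff_mem _ _).mpr
      (Submodule.mem_span_singleton.mpr ⟨_, hv0.symm⟩)
    exact sum_mem fun j hj => Submodule.smul_mem _ _ (sup_le_sup_left hv0b _
      (mem_shiftedKrylovImage_sup_span_of_arnoldi δ harn hsub j
        (Nat.lt_succ_iff.mp (mem_range.mp hj))))
  have key := inner_self_smul_sub_eq_of_mem_sup_span hu hr hyM
    (sum_conj_smul_mem_orthogonal_shiftedKrylovImage hv harn hrec)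
  rw [hyb, inner_self_eq_norm_sq_to_K] at key
  have hres : b - u = ((‖b‖ / ‖y‖ ^ 2 : ℝ) : 𝕜) • y := by
    rw [RCLike.ofReal_div, RCLike.ofReal_pow, div_eq_inv_mul, mul_smul, ← key, smul_smul,
      inv_mul_cancel₀ (by exact_mod_cast (by positivity : ‖y‖ ^ 2 ≠ 0)), one_smul]
  rw [hres, inv_norm_smul_ofReal_smul (by positivity), ← hy, Real.sqrt_sq (norm_nonneg y)]

end Arnoldi

section Euclidean

theorem map_toLp_span_eq_shiftedKrylovImage {𝕜 ι : Type*} [RCLike 𝕜] [Fintype ι]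
    [DecidableEq ι]    (A : Matrix ι ι 𝕜) (v : ℕ → ι → 𝕜) (δ : 𝕜) (k : ℕ) :
    (Submodule.span 𝕜 {x | ∃ j < k, x = (A - δ • 1) *ᵥ v j}).map
        (WithLp.linearEquiv 2 𝕜 (ι → 𝕜)).symm.toLinearMap =
      shiftedKrylovImage (fun x => toLp 2 (A *ᵥ ofLp x)) (fun j => toLp 2 (v j)) δ k := by
  rw [Submodule.map_span, shiftedKrylovImage]
  congr 1
  ext x
  simp [sub_mulVec, smul_mulVec, eq_comm]

variable {n : ℕ}

theorem inn_eq_inner (x y : Fin n → ℂ) : inn x y = ⟪toLp 2 x, toLp 2 y⟫_ℂ := by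
  simp [inn, EuclideanSpace.inner_toLp_toLp, dotProduct, mul_comm]

theorem nrm_eq_norm (x : Fin n → ℂ) : nrm x = ‖toLp 2 x‖ := by
  rw [nrm, norm_eq_sqrt_re_inner (𝕜 := ℂ), inn_eq_inner]; rfl

theorem toLp_mem_orthogonal_map_toLp {S : Submodule ℂ (Fin n → ℂ)} {x : Fin n → ℂ}
    (h : ∀ y ∈ S, inn y x = 0) :
    toLp 2 x ∈ (S.map (WithLp.linearEquiv 2 ℂ (Fin n → ℂ)).symm.toLinearMap)ᗮ := by
  rw [Submodule.mem_orthogonal]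
  rintro _ ⟨y, hy, rfl⟩
  exact (inn_eq_inner y x).symm.trans (h y hy)

end Euclidean

def hessEntry {R : Type*} [Zero R] {N : ℕ} (H : Matrix (Fin N) (Fin N) R) (i j : ℕ) : R :=
  if hij : i < N ∧ j < N then H ⟨i, hij.1⟩ ⟨j, hij.2⟩ else 0

theorem hessEntry_of_lt {R : Type*} [Zero R] {N : ℕ} (H : Matrix (Fin N) (Fin N) R) {i j : ℕ}
    (hi : i < N) (hj : j < N) : hessEntry H i j = H ⟨i, hi⟩ ⟨j, hj⟩ :=
  dif_pos ⟨hi, hj⟩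

theorem sum_fin_eq_sum_range_hessEntry {R M : Type*} [Zero R] [AddCommMonoid M] {N m k : ℕ}
    (H : Matrix (Fin N) (Fin N) R) (hm : m ≤ N) (hk : k < N) (f : ℕ → R → M) :
    ∑ j : Fin m, f j (H ⟨j, j.isLt.trans_le hm⟩ ⟨k, hk⟩) =
      ∑ j ∈ range m, f j (hessEntry H j k) := by
  rw [← Fin.sum_univ_eq_sum_range]
  exact sum_congr rfl fun j _ => by rw [hessEntry_of_lt H (j.isLt.trans_le hm) hk]

theorem sum_hessEntry_mul_eval_eq {R : Type*} [CommRing R] {N k : ℕ}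
    {H : Matrix (Fin N) (Fin N) R} {q : ℕ → R[X]} (hk : k + 1 < N)
    (hrec : C (H ⟨k + 1, hk⟩ ⟨k, k.lt_succ_self.trans hk⟩) * q (k + 1) =
      X * q k - ∑ j : Fin (k + 1), C (H ⟨j, j.isLt.trans hk⟩ ⟨k, k.lt_succ_self.trans hk⟩) * q j)
    (x : R) : ∑ i ∈ range (k + 2), hessEntry H i k * (q i).eval x = x * (q k).eval x := by
  have hpoly := congrArg (eval x) hrec
  simp only [eval_mul, eval_C, eval_sub, eval_X, eval_finsetSum] at hpoly
  have hsum := sum_fin_eq_sum_range_hessEntry H hk.le (k.lt_succ_self.trans hk)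
    (fun i c => c * eval x (q i))
  beta_reduce at hsum
  rw [sum_range_succ, ← hsum, hessEntry_of_lt H hk (by omega)]
  linear_combination hpoly

-- Indices are 0-based: `v j` is the paper's `v_{j+1}`.
theorem stmt8_general (n N : ℕ)
    (A : Matrix (Fin n) (Fin n) ℂ) (b : Fin n → ℂ) (hb : b ≠ 0)
    (v : ℕ → Fin n → ℂ)
    (horth : ∀ i j : ℕ, i < N → j < N → inn (v i) (v j) = if i = j then 1 else 0)
    (hv1 : v 0 = (((nrm b)⁻¹ : ℝ) : ℂ) • b)
    (H : Matrix (Fin N) (Fin N) ℂ)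
    (hsub : ∀ (k : ℕ) (hk : k + 1 < N),
      0 < (H ⟨k + 1, hk⟩ ⟨k, Nat.lt_of_succ_lt hk⟩).re ∧
        (H ⟨k + 1, hk⟩ ⟨k, Nat.lt_of_succ_lt hk⟩).im = 0)
    (harn : ∀ (k : ℕ) (hk : k + 1 < N),
      A.mulVec (v k) = ∑ j : Fin (k + 2),
        H ⟨(j : ℕ), Nat.lt_of_le_of_lt (Nat.lt_succ_iff.mp j.isLt) hk⟩
          ⟨k, Nat.lt_of_succ_lt hk⟩ • v (j : ℕ))
    (q : ℕ → Polynomial ℂ) (hq0 : q 0 = 1)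
    (hqrec : ∀ (k : ℕ) (hk : k + 1 < N),
      Polynomial.C (H ⟨k + 1, hk⟩ ⟨k, Nat.lt_of_succ_lt hk⟩) * q (k + 1) =
        Polynomial.X * q k -
          ∑ j : Fin (k + 1),
            Polynomial.C (H ⟨(j : ℕ), Nat.lt_trans j.isLt hk⟩ ⟨k, Nat.lt_of_succ_lt hk⟩) *
              q (j : ℕ))
    (u : ℂ → ℕ → Fin n → ℂ)
    (humem : ∀ (δ : ℂ) (k : ℕ), k < N →
      u δ k ∈ Submodule.span ℂ {x : Fin n → ℂ | ∃ j < k, x = (A - δ • 1).mulVec (v j)})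
    (huperp : ∀ (δ : ℂ) (k : ℕ), k < N →
      ∀ y ∈ Submodule.span ℂ {x : Fin n → ℂ | ∃ j < k, x = (A - δ • 1).mulVec (v j)},
        inn y (b - u δ k) = 0)
    (r : ℂ → ℕ → Fin n → ℂ) (hr : ∀ δ k, r δ k = b - u δ k)
    (w : ℂ → ℕ → Fin n → ℂ) (hw : ∀ δ k, w δ k = (((nrm (r δ k))⁻¹ : ℝ) : ℂ) • r δ k)
 :
    ∀ (δ : ℂ) (k : ℕ), k < N →
      w δ k = (((sigmaP q δ k)⁻¹ : ℝ) : ℂ) •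
        ∑ j ∈ Finset.range (k + 1), (starRingEnd ℂ) ((q j).eval δ) • v j := by
  intro δ k hk
  have hkN : ∀ j < k, j + 1 < N := fun j hj => by omega
  apply WithLp.toLp_injective 2
  rw [hw, hr]
  simp only [WithLp.toLp_smul, WithLp.toLp_sum, nrm_eq_norm]
  refine inv_norm_smul_sub_eq_of_arnoldi (T := fun x => toLp 2 (A *ᵥ ofLp x))
    (h := hessEntry H) (Q := fun j => (q j).eval δ) (δ := δ) (b := toLp 2 b)
    (u := toLp 2 (u δ k)) ((WithLp.toLp_injective 2).ne hb) ?_ ?_ ?_ ?_ (by simp [hq0])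
    (fun j hj => sum_hessEntry_mul_eval_eq (hkN j hj) (hqrec j (hkN j hj)) δ) ?_ ?_
  · intro i hi j hj
    rw [mem_range] at hi hj
    rw [← inn_eq_inner]
    exact horth i j (by omega) (by omega)
  · rw [hv1, nrm_eq_norm]; rfl
  · intro j hj
    simpa using congrArg (toLp 2) ((harn j (hkN j hj)).trans
      (sum_fin_eq_sum_range_hessEntry H (hkN j hj) _ fun i c => c • v i))
  · intro j hj
    rw [hessEntry_of_lt H (hkN j hj) (by omega)]
    exact fun h0 => by simpa [h0] using (hsub j (hkN j hj)).1
  · rw [← map_toLp_span_eq_shiftedKrylovImage]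
    exact Submodule.mem_map_of_mem (humem δ k hk)
  · rw [← map_toLp_span_eq_shiftedKrylovImage]
    exact toLp_mem_orthogonal_map_toLp (huperp δ k hk)

/-- The normalized GMRES residual satisfies
`w_k(δ) = σ_k(δ)⁻¹ Σ_{j=0}^k conj(q_j(δ)) v_{j+1}` (`0`-based: `v_{j+1}` is `v j`). -/
theorem stmt8 (n N : ℕ) (hN : 1 ≤ N) (hNn : N ≤ n)
    (A : Matrix (Fin n) (Fin n) ℂ) (b : Fin n → ℂ) (hb : b ≠ 0)
    (v : ℕ → Fin n → ℂ)
    (horth : ∀ i j : ℕ, i < N → j < N → inn (v i) (v j) = if i = j then 1 else 0)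
    (hv1 : v 0 = (((nrm b)⁻¹ : ℝ) : ℂ) • b)
    (H : Matrix (Fin N) (Fin N) ℂ)
    (hHess : ∀ i j : Fin N, (j : ℕ) + 1 < (i : ℕ) → H i j = 0)
    (hsub : ∀ (k : ℕ) (hk : k + 1 < N),
      0 < (H ⟨k + 1, hk⟩ ⟨k, Nat.lt_of_succ_lt hk⟩).re ∧
        (H ⟨k + 1, hk⟩ ⟨k, Nat.lt_of_succ_lt hk⟩).im = 0)
    (harn : ∀ (k : ℕ) (hk : k + 1 < N),
      A.mulVec (v k) = ∑ j : Fin (k + 2),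
        H ⟨(j : ℕ), Nat.lt_of_le_of_lt (Nat.lt_succ_iff.mp j.isLt) hk⟩
          ⟨k, Nat.lt_of_succ_lt hk⟩ • v (j : ℕ))
    (harnN : A.mulVec (v (N - 1)) =
      ∑ j : Fin N, H j ⟨N - 1, Nat.sub_lt hN Nat.one_pos⟩ • v (j : ℕ))
    (q : ℕ → Polynomial ℂ) (hq0 : q 0 = 1)
    (hqrec : ∀ (k : ℕ) (hk : k + 1 < N),
      Polynomial.C (H ⟨k + 1, hk⟩ ⟨k, Nat.lt_of_succ_lt hk⟩) * q (k + 1) =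
        Polynomial.X * q k -
          ∑ j : Fin (k + 1),
            Polynomial.C (H ⟨(j : ℕ), Nat.lt_trans j.isLt hk⟩ ⟨k, Nat.lt_of_succ_lt hk⟩) *
              q (j : ℕ))
    (u : ℂ → ℕ → Fin n → ℂ)
    (humem : ∀ (δ : ℂ) (k : ℕ), k < N →
      u δ k ∈ Submodule.span ℂ {x : Fin n → ℂ | ∃ j < k, x = (A - δ • 1).mulVec (v j)})
    (huperp : ∀ (δ : ℂ) (k : ℕ), k < N →
      ∀ y ∈ Submodule.span ℂ {x : Fin n → ℂ | ∃ j < k, x = (A - δ • 1).mulVec (v j)},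
        inn y (b - u δ k) = 0)
    (r : ℂ → ℕ → Fin n → ℂ) (hr : ∀ δ k, r δ k = b - u δ k)
    (hrne : ∀ (δ : ℂ) (k : ℕ), k < N → r δ k ≠ 0)
    (w : ℂ → ℕ → Fin n → ℂ) (hw : ∀ δ k, w δ k = (((nrm (r δ k))⁻¹ : ℝ) : ℂ) • r δ k)
 :
    ∀ (δ : ℂ) (k : ℕ), k < N →
      w δ k = (((sigmaP q δ k)⁻¹ : ℝ) : ℂ) •
        ∑ j ∈ Finset.range (k + 1), (starRingEnd ℂ) ((q j).eval δ) • v j :=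
  stmt8_general n N A b hb v horth hv1 H hsub harn q hq0 hqrec u humem huperp r hr w hw
end

section
/- For every δ ∈ ℂ and 1 ≤ k ≤ N−1, the normalized GMRES residuals satisfy the updating formula w_k(δ) = s_k(δ)·w_{k−1}(δ) + (−1)^k·conj(c_k(δ))·v_{k+1}. -/
/-!
Write `p_j = q_j(δ)` and `t_m = ∑_{j ≤ m} conj(p_j) v_j`. By orthonormality `⟨v_j, t_m⟩ = conj(p_j)`
for `j ≤ m`, so the recurrence defining the `q_j`, evaluated at `δ`, says precisely that `t_m` is
orthogonal to every `(A - δ) v_i` with `i < m`, i.e. to the shifted Krylov space `K_m`; moreover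
`‖t_m‖ = σ_m`. Since `v_0, …, v_m` lie in `K_m + ℂ v_0` and `⟨v_0, t_m⟩ = 1`, the vector
`b - (‖b‖ / σ_m²) t_m` lies in `K_m`. Hence `r_m = (‖b‖ / σ_m²) t_m` is the GMRES residual and
`w_m = t_m / σ_m`; dividing `t_m = t_{m-1} + conj(p_m) v_m` by `σ_m` gives the updating formula.
-/

open Polynomial Matrix Finset

section InnerProduct

variable {n : ℕ}

lemma inn_eq_star_dotProduct (x y : Fin n → ℂ) : inn x y = star x ⬝ᵥ y := rfl

lemma inn_add_left (x y z : Fin n → ℂ) : inn (x + y) z = inn x z + inn y z := by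
  simp [inn_eq_star_dotProduct, add_dotProduct]

lemma inn_sub_left (x y z : Fin n → ℂ) : inn (x - y) z = inn x z - inn y z := by
  simp [inn_eq_star_dotProduct, sub_dotProduct]

lemma inn_sub_right (x y z : Fin n → ℂ) : inn x (y - z) = inn x y - inn x z :=
  dotProduct_sub _ _ _

lemma inn_smul_left (c : ℂ) (x y : Fin n → ℂ) :
    inn (c • x) y = starRingEnd ℂ c * inn x y := by
  simp [inn_eq_star_dotProduct, star_smul, smul_dotProduct]

lemma inn_smul_right (c : ℂ) (x y : Fin n → ℂ) : inn x (c • y) = c * inn x y :=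
  dotProduct_smul _ _ _

lemma inn_sum_left {ι : Type*} (s : Finset ι) (f : ι → Fin n → ℂ) (y : Fin n → ℂ) :
    inn (∑ j ∈ s, f j) y = ∑ j ∈ s, inn (f j) y := by
  simp [inn_eq_star_dotProduct, star_sum, sum_dotProduct]

lemma inn_sum_right {ι : Type*} (s : Finset ι) (f : ι → Fin n → ℂ) (x : Fin n → ℂ) :
    inn x (∑ j ∈ s, f j) = ∑ j ∈ s, inn x (f j) :=
  dotProduct_sum _ _ _

open scoped ComplexOrder in
lemma inn_self_eq_zero {x : Fin n → ℂ} : inn x x = 0 ↔ x = 0 :=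
  dotProduct_star_self_eq_zero

open scoped ComplexOrder in
lemma nrm_pos {x : Fin n → ℂ} (hx : x ≠ 0) : 0 < nrm x := by
  have h : (0 : ℂ) < inn x x :=
    (dotProduct_star_self_nonneg x).lt_of_ne (Ne.symm (inn_self_eq_zero.not.mpr hx))
  exact Real.sqrt_pos.mpr (Complex.pos_iff.mp h).1

lemma inn_eq_zero_of_mem_span {s : Set (Fin n → ℂ)} {t : Fin n → ℂ}
    (h : ∀ x ∈ s, inn x t = 0) {y : Fin n → ℂ} (hy : y ∈ Submodule.span ℂ s) : inn y t = 0 := by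
  induction hy using Submodule.span_induction with
  | mem x hx => exact h x hx
  | zero => simp [inn]
  | add x y _ _ hx hy => rw [inn_add_left, hx, hy, add_zero]
  | smul a x _ hx => rw [inn_smul_left, hx, mul_zero]

lemma eq_zero_of_mem_of_forall_inn_eq_zero {K : Submodule ℂ (Fin n → ℂ)} {x : Fin n → ℂ}
    (hx : x ∈ K) (h : ∀ y ∈ K, inn y x = 0) : x = 0 :=
  inn_self_eq_zero.mp (h x hx)

lemma mem_of_mem_sup_span_singleton {K : Submodule ℂ (Fin n → ℂ)} {e t x : Fin n → ℂ}
    (hx : x ∈ K ⊔ Submodule.span ℂ {e}) (hK : ∀ y ∈ K, inn y t = 0) (hxt : inn x t = 0)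
    (het : inn e t ≠ 0) : x ∈ K := by
  obtain ⟨y, hy, _, he, rfl⟩ := Submodule.mem_sup.mp hx
  obtain ⟨α, rfl⟩ := Submodule.mem_span_singleton.mp he
  rw [inn_add_left, hK y hy, zero_add, inn_smul_left, mul_eq_zero, map_eq_zero] at hxt
  simpa [hxt.resolve_right het] using hy

lemma nrm_ofReal_smul (a : ℝ) (x : Fin n → ℂ) : nrm ((a : ℂ) • x) = |a| * nrm x := by
  rw [nrm, nrm, inn_smul_left, inn_smul_right, ← mul_assoc, Complex.conj_ofReal,
    ← Complex.ofReal_mul, Complex.re_ofReal_mul, Real.sqrt_mul (mul_self_nonneg a),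
    Real.sqrt_mul_self_eq_abs]

lemma inv_nrm_smul_ofReal_smul {a : ℝ} (ha : 0 < a) (x : Fin n → ℂ) :
    (((nrm ((a : ℂ) • x))⁻¹ : ℝ) : ℂ) • ((a : ℂ) • x) = (((nrm x)⁻¹ : ℝ) : ℂ) • x := by
  rw [nrm_ofReal_smul, abs_of_pos ha, smul_smul, ← Complex.ofReal_mul, _root_.mul_inv_rev,
    inv_mul_cancel_right₀ ha.ne']

end InnerProduct

section GMRES

variable {n N : ℕ} {A : Matrix (Fin n) (Fin n) ℂ} {v : ℕ → Fin n → ℂ} {h : ℕ → ℕ → ℂ}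
  {p : ℕ → ℂ} {δ : ℂ} {m : ℕ}

def OrthonormalBelow (N : ℕ) (v : ℕ → Fin n → ℂ) : Prop :=
  ∀ i j : ℕ, i < N → j < N → inn (v i) (v j) = if i = j then 1 else 0

def ArnoldiRelation (N : ℕ) (A : Matrix (Fin n) (Fin n) ℂ) (h : ℕ → ℕ → ℂ)
    (v : ℕ → Fin n → ℂ) : Prop :=
  ∀ i, i + 1 < N → A *ᵥ v i = ∑ j ∈ range (i + 2), h j i • v j

noncomputable def shiftedKrylov (A : Matrix (Fin n) (Fin n) ℂ) (δ : ℂ) (v : ℕ → Fin n → ℂ)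
    (m : ℕ) : Submodule ℂ (Fin n → ℂ) :=
  Submodule.span ℂ {x | ∃ j < m, x = (A - δ • 1) *ᵥ v j}

noncomputable def residualDirection (v : ℕ → Fin n → ℂ) (p : ℕ → ℂ) (m : ℕ) : Fin n → ℂ :=
  ∑ j ∈ range (m + 1), starRingEnd ℂ (p j) • v j

lemma residualDirection_succ :
    residualDirection v p (m + 1) =
      residualDirection v p m + starRingEnd ℂ (p (m + 1)) • v (m + 1) :=
  sum_range_succ _ _

lemma inn_residualDirection
    (horth : OrthonormalBelow N v) {j : ℕ} (hj : j ≤ m) (hm : m < N) :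
    inn (v j) (residualDirection v p m) = starRingEnd ℂ (p j) := by
  rw [residualDirection, inn_sum_right, sum_eq_single_of_mem j (mem_range.mpr (by omega))]
  · rw [inn_smul_right, horth j j (by omega) (by omega), if_pos rfl, mul_one]
  · intro i hi hij
    have hiN : i < N := (mem_range.mp hi).trans_le hm
    rw [inn_smul_right, horth j i (by omega) hiN, if_neg (Ne.symm hij), mul_zero]

lemma inn_residualDirection_self
    (horth : OrthonormalBelow N v) (hm : m < N) :
    inn (residualDirection v p m) (residualDirection v p m) =
      ((∑ j ∈ range (m + 1), ‖p j‖ ^ 2 : ℝ) : ℂ) := by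
  rw [residualDirection, inn_sum_left, Complex.ofReal_sum]
  refine sum_congr rfl fun j hj => ?_
  rw [inn_smul_left, ← residualDirection,
    inn_residualDirection horth (Nat.lt_succ_iff.mp (mem_range.mp hj)) hm, Complex.conj_conj,
    Complex.mul_conj, Complex.normSq_eq_norm_sq, Complex.ofReal_pow]

lemma inn_shiftedKrylov_generator_residualDirection
    (horth : OrthonormalBelow N v) (harn : ArnoldiRelation N A h v)
    (hp : ∀ i, i + 1 < N → ∑ j ∈ range (i + 2), h j i * p j = δ * p i)
    {i : ℕ} (him : i < m) (hm : m < N) :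
    inn ((A - δ • 1) *ᵥ v i) (residualDirection v p m) = 0 := by
  have hi : i + 1 < N := by omega
  have hterm : ∀ j ∈ range (i + 2),
      inn (h j i • v j) (residualDirection v p m) = starRingEnd ℂ (h j i * p j) := by
    intro j hj
    rw [inn_smul_left, inn_residualDirection horth (by grind) hm, map_mul]
  rw [sub_mulVec, smul_mulVec, one_mulVec, harn i hi, inn_sub_left, inn_sum_left,
    sum_congr rfl hterm, ← map_sum, hp i hi, inn_smul_left, inn_residualDirection horth him.le hm,
    map_mul, sub_self]

lemma inn_eq_zero_of_mem_shiftedKrylov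
    (horth : OrthonormalBelow N v) (harn : ArnoldiRelation N A h v)
    (hp : ∀ i, i + 1 < N → ∑ j ∈ range (i + 2), h j i * p j = δ * p i)
    (hm : m < N) {y : Fin n → ℂ} (hy : y ∈ shiftedKrylov A δ v m) :
    inn y (residualDirection v p m) = 0 :=
  inn_eq_zero_of_mem_span (by
    rintro _ ⟨i, him, rfl⟩
    exact inn_shiftedKrylov_generator_residualDirection horth harn hp him hm) hy

lemma mem_shiftedKrylov_sup_span_v_zero
    (harn : ArnoldiRelation N A h v)
    (hsub : ∀ i, i + 1 < N → h (i + 1) i ≠ 0) (hm : m < N) {j : ℕ} (hj : j ≤ m) :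
    v j ∈ shiftedKrylov A δ v m ⊔ Submodule.span ℂ {v 0} := by
  induction j using Nat.strong_induction_on with
  | _ j ih =>
    rcases j with _ | i
    · exact Submodule.mem_sup_right (Submodule.mem_span_singleton_self _)
    have hi : i + 1 < N := by omega
    have hnext : h (i + 1) i • v (i + 1) =
        (A - δ • 1) *ᵥ v i - (∑ l ∈ range (i + 1), h l i • v l - δ • v i) := by
      rw [sub_mulVec, smul_mulVec, one_mulVec, harn i hi, sum_range_succ]
      abel
    refine (Submodule.smul_mem_iff _ (hsub i hi)).mp ?_
    rw [hnext]
    refine sub_mem (Submodule.mem_sup_left (Submodule.subset_span ⟨i, by omega, rfl⟩))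
      (sub_mem (sum_mem fun l hl => Submodule.smul_mem _ _ (ih l ?_ ?_))
        (Submodule.smul_mem _ _ (ih i (by omega) (by omega))))
    all_goals grind

lemma sum_norm_sq_pos (hp0 : p 0 = 1) : 0 < ∑ j ∈ range (m + 1), ‖p j‖ ^ 2 :=
  sum_pos' (fun _ _ => by positivity) ⟨0, by simp, by simp [hp0]⟩

lemma residual_eq_smul_residualDirection
    (horth : OrthonormalBelow N v) (harn : ArnoldiRelation N A h v)
    (hsub : ∀ i, i + 1 < N → h (i + 1) i ≠ 0)
    (hp : ∀ i, i + 1 < N → ∑ j ∈ range (i + 2), h j i * p j = δ * p i) (hp0 : p 0 = 1)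
    {b u : Fin n → ℂ} {c : ℝ} (hb : b = (c : ℂ) • v 0) (hm : m < N)
    (hu : u ∈ shiftedKrylov A δ v m)
    (hperp : ∀ y ∈ shiftedKrylov A δ v m, inn y (b - u) = 0) :
    b - u = ((c / ∑ j ∈ range (m + 1), ‖p j‖ ^ 2 : ℝ) : ℂ) • residualDirection v p m := by
  set K := shiftedKrylov A δ v m
  set t := residualDirection v p m
  set s := ∑ j ∈ range (m + 1), ‖p j‖ ^ 2
  have hs : 0 < s := sum_norm_sq_pos hp0
  have hKt : ∀ y ∈ K, inn y t = 0 := fun y hy =>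
    inn_eq_zero_of_mem_shiftedKrylov horth harn hp hm hy
  have hv0t : inn (v 0) t = 1 := by rw [inn_residualDirection horth m.zero_le hm, hp0, map_one]
  -- `b - (c / s) t` lies in `K ⊔ ℂ v₀` and is orthogonal to `t`, while `⟨v₀, t⟩ = 1`.
  have hx : b - ((c / s : ℝ) : ℂ) • t ∈ K := by
    refine mem_of_mem_sup_span_singleton ?_ hKt ?_ (hv0t ▸ one_ne_zero)
    · refine sub_mem (hb ▸ Submodule.smul_mem _ _ ?_) (Submodule.smul_mem _ _ ?_)
      · exact mem_shiftedKrylov_sup_span_v_zero harn hsub hm m.zero_le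
      · exact sum_mem fun j hj => Submodule.smul_mem _ _
          (mem_shiftedKrylov_sup_span_v_zero harn hsub hm (Nat.lt_succ_iff.mp (mem_range.mp hj)))
    · rw [inn_sub_left, hb, inn_smul_left, hv0t, inn_smul_left, inn_residualDirection_self horth hm,
        Complex.conj_ofReal, Complex.conj_ofReal, ← Complex.ofReal_mul, div_mul_cancel₀ _ hs.ne',
        mul_one, sub_self]
  refine sub_eq_zero.mp (eq_zero_of_mem_of_forall_inn_eq_zero (K := K) ?_ fun y hy => ?_)
  · rw [sub_right_comm]
    exact sub_mem hx hu
  · rw [inn_sub_right, hperp y hy, inn_smul_right, hKt y hy, mul_zero, sub_zero]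

lemma inv_nrm_smul_residual_eq
    (horth : OrthonormalBelow N v) (harn : ArnoldiRelation N A h v)
    (hsub : ∀ i, i + 1 < N → h (i + 1) i ≠ 0)
    (hp : ∀ i, i + 1 < N → ∑ j ∈ range (i + 2), h j i * p j = δ * p i) (hp0 : p 0 = 1)
    {b u : Fin n → ℂ} {c : ℝ} (hc : 0 < c) (hb : b = (c : ℂ) • v 0) (hm : m < N)
    (hu : u ∈ shiftedKrylov A δ v m)
    (hperp : ∀ y ∈ shiftedKrylov A δ v m, inn y (b - u) = 0) :
    (((nrm (b - u))⁻¹ : ℝ) : ℂ) • (b - u) =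
      (((√(∑ j ∈ range (m + 1), ‖p j‖ ^ 2))⁻¹ : ℝ) : ℂ) • residualDirection v p m := by
  rw [residual_eq_smul_residualDirection horth harn hsub hp hp0 hb hm hu hperp,
    inv_nrm_smul_ofReal_smul (div_pos hc (sum_norm_sq_pos hp0)), nrm,
    inn_residualDirection_self horth hm, Complex.ofReal_re]

end GMRES

noncomputable def entryOrZero {N : ℕ} (H : Matrix (Fin N) (Fin N) ℂ) (j i : ℕ) : ℂ :=
  if h : j < N ∧ i < N then H ⟨j, h.1⟩ ⟨i, h.2⟩ else 0

lemma entryOrZero_of_lt {N : ℕ} (H : Matrix (Fin N) (Fin N) ℂ) {j i : ℕ} (hj : j < N)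
    (hi : i < N) : entryOrZero H j i = H ⟨j, hj⟩ ⟨i, hi⟩ :=
  dif_pos ⟨hj, hi⟩

lemma sum_range_entryOrZero_smul {N : ℕ} {M : Type*} [AddCommMonoid M] [Module ℂ M]
    (H : Matrix (Fin N) (Fin N) ℂ) (f : ℕ → M) {i k : ℕ} (hi : i < N) (hk : k ≤ N) :
    ∑ j ∈ range k, entryOrZero H j i • f j =
      ∑ j : Fin k, H ⟨j, j.isLt.trans_le hk⟩ ⟨i, hi⟩ • f j := by
  rw [sum_range (fun j => entryOrZero H j i • f j)]
  exact sum_congr rfl fun j _ => by rw [entryOrZero_of_lt H (j.isLt.trans_le hk) hi]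

lemma sum_range_entryOrZero_mul_eval {N : ℕ} (H : Matrix (Fin N) (Fin N) ℂ)
    {q : ℕ → Polynomial ℂ}
    (hqrec : ∀ (k : ℕ) (hk : k + 1 < N),
      Polynomial.C (H ⟨k + 1, hk⟩ ⟨k, Nat.lt_of_succ_lt hk⟩) * q (k + 1) =
        Polynomial.X * q k -
          ∑ j : Fin (k + 1),
            Polynomial.C (H ⟨(j : ℕ), Nat.lt_trans j.isLt hk⟩ ⟨k, Nat.lt_of_succ_lt hk⟩) *
              q (j : ℕ))
    (δ : ℂ) (i : ℕ) (hi : i + 1 < N) :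
    ∑ j ∈ range (i + 2), entryOrZero H j i * (q j).eval δ = δ * (q i).eval δ := by
  have hrec := congrArg (eval δ) (hqrec i hi)
  simp only [eval_mul, eval_C, eval_X, eval_sub, eval_finsetSum] at hrec
  rw [sum_range_succ, entryOrZero_of_lt H hi (by omega), hrec]
  simp_rw [← smul_eq_mul, sum_range_entryOrZero_smul H _ (by omega : i < N) hi.le]
  ring

/-- Indices are 0-based: the paper's `v_{k+1}` is `v k`. -/
theorem stmt9_general (n N : ℕ)
    (A : Matrix (Fin n) (Fin n) ℂ) (b : Fin n → ℂ) (hb : b ≠ 0)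
    (v : ℕ → Fin n → ℂ)
    (horth : ∀ i j : ℕ, i < N → j < N → inn (v i) (v j) = if i = j then 1 else 0)
    (hv1 : v 0 = (((nrm b)⁻¹ : ℝ) : ℂ) • b)
    (H : Matrix (Fin N) (Fin N) ℂ)
    (hsub : ∀ (k : ℕ) (hk : k + 1 < N),
      0 < (H ⟨k + 1, hk⟩ ⟨k, Nat.lt_of_succ_lt hk⟩).re ∧
        (H ⟨k + 1, hk⟩ ⟨k, Nat.lt_of_succ_lt hk⟩).im = 0)
    (harn : ∀ (k : ℕ) (hk : k + 1 < N),
      A.mulVec (v k) = ∑ j : Fin (k + 2),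
        H ⟨(j : ℕ), Nat.lt_of_le_of_lt (Nat.lt_succ_iff.mp j.isLt) hk⟩
          ⟨k, Nat.lt_of_succ_lt hk⟩ • v (j : ℕ))
    (q : ℕ → Polynomial ℂ) (hq0 : q 0 = 1)
    (hqrec : ∀ (k : ℕ) (hk : k + 1 < N),
      Polynomial.C (H ⟨k + 1, hk⟩ ⟨k, Nat.lt_of_succ_lt hk⟩) * q (k + 1) =
        Polynomial.X * q k -
          ∑ j : Fin (k + 1),
            Polynomial.C (H ⟨(j : ℕ), Nat.lt_trans j.isLt hk⟩ ⟨k, Nat.lt_of_succ_lt hk⟩) *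
              q (j : ℕ))
    (u : ℂ → ℕ → Fin n → ℂ)
    (humem : ∀ (δ : ℂ) (k : ℕ), k < N →
      u δ k ∈ Submodule.span ℂ {x : Fin n → ℂ | ∃ j < k, x = (A - δ • 1).mulVec (v j)})
    (huperp : ∀ (δ : ℂ) (k : ℕ), k < N →
      ∀ y ∈ Submodule.span ℂ {x : Fin n → ℂ | ∃ j < k, x = (A - δ • 1).mulVec (v j)},
        inn y (b - u δ k) = 0)
    (r : ℂ → ℕ → Fin n → ℂ) (hr : ∀ δ k, r δ k = b - u δ k)
    (w : ℂ → ℕ → Fin n → ℂ) (hw : ∀ δ k, w δ k = (((nrm (r δ k))⁻¹ : ℝ) : ℂ) • r δ k)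
 :
    ∀ (δ : ℂ) (k : ℕ), 1 ≤ k → k < N →
      w δ k = ((sigmaP q δ (k - 1) / sigmaP q δ k : ℝ) : ℂ) • w δ (k - 1) +
        ((-1 : ℂ) ^ k *
          (starRingEnd ℂ) ((-1 : ℂ) ^ k * (q k).eval δ / (sigmaP q δ k : ℂ))) • v k := by
  intro δ k hk hkN
  have harn' : ArnoldiRelation N A (entryOrZero H) v :=
    fun i hi => (harn i hi).trans (sum_range_entryOrZero_smul H v (by omega) hi).symm
  have hsub' : ∀ i, i + 1 < N → entryOrZero H (i + 1) i ≠ 0 := fun i hi h0 => by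
    rw [entryOrZero_of_lt H hi (by omega)] at h0
    simpa [h0] using (hsub i hi).1
  have hbv : b = (nrm b : ℂ) • v 0 := by
    rw [hv1, smul_smul, ← Complex.ofReal_mul, mul_inv_cancel₀ (nrm_pos hb).ne',
      Complex.ofReal_one, one_smul]
  have hq0δ : (q 0).eval δ = 1 := by rw [hq0, eval_one]
  have hw' : ∀ m < N, w δ m =
      (((sigmaP q δ m)⁻¹ : ℝ) : ℂ) • residualDirection v (fun j => (q j).eval δ) m :=
    fun m hm => by
      rw [hw, hr]
      exact inv_nrm_smul_residual_eq horth harn' hsub' (sum_range_entryOrZero_mul_eval H hqrec δ)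
        hq0δ (nrm_pos hb) hbv hm (humem δ m hm) (huperp δ m hm)
  obtain ⟨k, rfl⟩ : ∃ k', k = k' + 1 := ⟨k - 1, by omega⟩
  have hσ : sigmaP q δ k ≠ 0 := (Real.sqrt_pos.mpr (sum_norm_sq_pos hq0δ)).ne'
  rw [Nat.add_sub_cancel, hw' _ hkN, hw' k (by omega), residualDirection_succ, smul_add,
    smul_smul, smul_smul]
  congr 2
  · rw [← Complex.ofReal_mul]
    field_simp [hσ]
  · rw [map_div₀, map_mul, map_pow, map_neg, map_one, Complex.conj_ofReal, ← mul_div_assoc,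
      ← mul_assoc, ← mul_pow, neg_one_mul, neg_neg, one_pow, one_mul, Complex.ofReal_inv,
      inv_mul_eq_div]

/-- The normalized GMRES residuals satisfy the updating formula
`w_k(δ) = s_k(δ) w_{k-1}(δ) + (-1)^k conj(c_k(δ)) v_{k+1}`, where
`s_k(δ) = σ_{k-1}(δ)/σ_k(δ)` and `c_k(δ) = (-1)^k q_k(δ)/σ_k(δ)`
(`0`-based: `v_{k+1}` is `v k`). -/
theorem stmt9 (n N : ℕ) (hN : 1 ≤ N) (hNn : N ≤ n)
    (A : Matrix (Fin n) (Fin n) ℂ) (b : Fin n → ℂ) (hb : b ≠ 0)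
    (v : ℕ → Fin n → ℂ)
    (horth : ∀ i j : ℕ, i < N → j < N → inn (v i) (v j) = if i = j then 1 else 0)
    (hv1 : v 0 = (((nrm b)⁻¹ : ℝ) : ℂ) • b)
    (H : Matrix (Fin N) (Fin N) ℂ)
    (hHess : ∀ i j : Fin N, (j : ℕ) + 1 < (i : ℕ) → H i j = 0)
    (hsub : ∀ (k : ℕ) (hk : k + 1 < N),
      0 < (H ⟨k + 1, hk⟩ ⟨k, Nat.lt_of_succ_lt hk⟩).re ∧
        (H ⟨k + 1, hk⟩ ⟨k, Nat.lt_of_succ_lt hk⟩).im = 0)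
    (harn : ∀ (k : ℕ) (hk : k + 1 < N),
      A.mulVec (v k) = ∑ j : Fin (k + 2),
        H ⟨(j : ℕ), Nat.lt_of_le_of_lt (Nat.lt_succ_iff.mp j.isLt) hk⟩
          ⟨k, Nat.lt_of_succ_lt hk⟩ • v (j : ℕ))
    (harnN : A.mulVec (v (N - 1)) =
      ∑ j : Fin N, H j ⟨N - 1, Nat.sub_lt hN Nat.one_pos⟩ • v (j : ℕ))
    (q : ℕ → Polynomial ℂ) (hq0 : q 0 = 1)
    (hqrec : ∀ (k : ℕ) (hk : k + 1 < N),
      Polynomial.C (H ⟨k + 1, hk⟩ ⟨k, Nat.lt_of_succ_lt hk⟩) * q (k + 1) =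
        Polynomial.X * q k -
          ∑ j : Fin (k + 1),
            Polynomial.C (H ⟨(j : ℕ), Nat.lt_trans j.isLt hk⟩ ⟨k, Nat.lt_of_succ_lt hk⟩) *
              q (j : ℕ))
    (u : ℂ → ℕ → Fin n → ℂ)
    (humem : ∀ (δ : ℂ) (k : ℕ), k < N →
      u δ k ∈ Submodule.span ℂ {x : Fin n → ℂ | ∃ j < k, x = (A - δ • 1).mulVec (v j)})
    (huperp : ∀ (δ : ℂ) (k : ℕ), k < N →
      ∀ y ∈ Submodule.span ℂ {x : Fin n → ℂ | ∃ j < k, x = (A - δ • 1).mulVec (v j)},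
        inn y (b - u δ k) = 0)
    (r : ℂ → ℕ → Fin n → ℂ) (hr : ∀ δ k, r δ k = b - u δ k)
    (hrne : ∀ (δ : ℂ) (k : ℕ), k < N → r δ k ≠ 0)
    (w : ℂ → ℕ → Fin n → ℂ) (hw : ∀ δ k, w δ k = (((nrm (r δ k))⁻¹ : ℝ) : ℂ) • r δ k)
 :
    ∀ (δ : ℂ) (k : ℕ), 1 ≤ k → k < N →
      w δ k = ((sigmaP q δ (k - 1) / sigmaP q δ k : ℝ) : ℂ) • w δ (k - 1) +
        ((-1 : ℂ) ^ k *
          (starRingEnd ℂ) ((-1 : ℂ) ^ k * (q k).eval δ / (sigmaP q δ k : ℂ))) • v k :=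
  stmt9_general n N A b hb v horth hv1 H hsub harn q hq0 hqrec u humem huperp r hr w hw
end

section
/- Assume additionally that p(z)/q(z) admits the partial fraction decomposition p(z)/q(z) = Σ_{ℓ=1}^{m₂} d_ℓ/(z − z_ℓ) + π(z), i.e. p(z) = Σ_{ℓ=1}^{m₂} d_ℓ·(q(z)/(z − z_ℓ)) + π(z)·q(z) as polynomials, with z_1, …, z_{m₂} ∈ ℂ the distinct simple roots of q, d_ℓ ∈ ℂ, and π a polynomial, and that no z_ℓ is an eigenvalue of H_N. Then for all 1 ≤ i ≤ j ≤ N the (i,j) entry of H_N − G_N·F_N^* − π(H_N)^* equals Σ_{ℓ=1}^{m₂} conj(d_ℓ)·conj(q_{i−1}(z_ℓ))·conj( ((H_N − z_ℓ·I_N)^{−1})_{j,1} ); equivalently, H_N − G_N·F_N^* − π(H_N)^* − Σ_{ℓ=1}^{m₂} conj(d_ℓ)·(q_0(z_ℓ), …, q_{N−1}(z_ℓ))^*·e_1^*·((H_N − z_ℓ·I_N)^{−1})^* is strictly lower triangular. -/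
open Polynomial Matrix Finset

/-!
Compressing the relation `Aᴴ = p(A) q(A)⁻¹ + F Gᴴ` with `V` (using `A V = V H`, `Vᴴ V = 1` and the
partial fraction expansion `p(A) q(A)⁻¹ = Σ d_ℓ (A - z_ℓ)⁻¹ + π(A)`) gives
`Hᴴ = Σ d_ℓ (H - z_ℓ)⁻¹ + π(H) + F_N G_Nᴴ`. It remains to read off the entries `(j, i)`, `i ≤ j`,
of the resolvents: row `j` of `(H - z)⁻¹` and the vector `(q_k(z))_k` both annihilate the columns
`c < j` of `H - z`, and for an unreduced Hessenberg matrix such a row vector is determined on the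
indices `≤ j` by its first entry.
-/

namespace Matrix

section Compression

variable {R : Type*} [CommRing R] {m n : Type*} [Fintype m] [Fintype n] [DecidableEq n]
  {A : Matrix m m R} {V : Matrix m n R} {H : Matrix n n R}

theorem mul_mul_eq_of_mul_eq {W : Matrix n m R} (hWV : W * V = 1) {X : Matrix m m R}
    {Y : Matrix n n R} (hXV : X * V = V * Y) : W * X * V = Y := by
  rw [Matrix.mul_assoc, hXV, ← Matrix.mul_assoc, hWV, Matrix.one_mul]

variable [DecidableEq m]

theorem aeval_mul_eq_mul_aeval (hAV : A * V = V * H) (r : R[X]) :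
    aeval A r * V = V * aeval H r := by
  have hpow : ∀ k : ℕ, A ^ k * V = V * H ^ k := by
    intro k
    induction k with
    | zero => simp
    | succ k ih =>
      rw [pow_succ, pow_succ, Matrix.mul_assoc, hAV, ← Matrix.mul_assoc, ih, Matrix.mul_assoc]
  induction r using Polynomial.induction_on' with
  | add r s hr hs => rw [map_add, map_add, Matrix.add_mul, Matrix.mul_add, hr, hs]
  | monomial k c =>
    simp only [aeval_monomial, Algebra.algebraMap_eq_smul_one, Matrix.smul_mul,
      Matrix.mul_smul, Matrix.one_mul, hpow]

theorem sub_smul_one_mul_eq (hAV : A * V = V * H) (z : R) :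
    (A - z • 1) * V = V * (H - z • 1) := by
  rw [Matrix.sub_mul, Matrix.mul_sub, hAV, Matrix.smul_mul, Matrix.mul_smul, Matrix.one_mul,
    Matrix.mul_one]

theorem inv_mul_eq_mul_inv (hAV : A * V = V * H) (hA : IsUnit A) (hH : IsUnit H) :
    A⁻¹ * V = V * H⁻¹ := by
  rw [isUnit_iff_isUnit_det] at hA hH
  calc A⁻¹ * V = A⁻¹ * (A * V) * H⁻¹ := by
        rw [hAV, Matrix.mul_assoc, mul_nonsing_inv_cancel_right _ _ hH]
    _ = V * H⁻¹ := by rw [nonsing_inv_mul_cancel_left _ _ hA]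

variable [StarRing R] {ι κ : Type*} [Fintype ι] [Fintype κ] {F G : Matrix m ι R}
  {z d : κ → R} {π : R[X]}

theorem conjTranspose_eq_sum_smul_inv_of_mul_eq (hV : Vᴴ * V = 1) (hAV : A * V = V * H)
    (hAz : ∀ ℓ, IsUnit (A - z ℓ • 1)) (hHz : ∀ ℓ, IsUnit (H - z ℓ • 1))
    (hA : Aᴴ = (∑ ℓ, d ℓ • (A - z ℓ • 1)⁻¹) + aeval A π + F * Gᴴ) :
    Hᴴ = (∑ ℓ, d ℓ • (H - z ℓ • 1)⁻¹) + aeval H π + (Vᴴ * F) * (Vᴴ * G)ᴴ := by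
  have hH : Hᴴ = Vᴴ * Aᴴ * V := by
    rw [← mul_mul_eq_of_mul_eq hV hAV, conjTranspose_mul, conjTranspose_mul,
      conjTranspose_conjTranspose, Matrix.mul_assoc]
  have hres : ∀ ℓ, Vᴴ * (A - z ℓ • 1)⁻¹ * V = (H - z ℓ • 1)⁻¹ := fun ℓ =>
    mul_mul_eq_of_mul_eq hV (inv_mul_eq_mul_inv (sub_smul_one_mul_eq hAV (z ℓ)) (hAz ℓ) (hHz ℓ))
  rw [hH, hA, Matrix.mul_add, Matrix.mul_add, Matrix.add_mul, Matrix.add_mul, Matrix.mul_sum,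
    Matrix.sum_mul, mul_mul_eq_of_mul_eq hV (aeval_mul_eq_mul_aeval hAV π), conjTranspose_mul,
    conjTranspose_conjTranspose, Matrix.mul_assoc, Matrix.mul_assoc, Matrix.mul_assoc]
  simp only [Matrix.mul_smul, Matrix.smul_mul, ← Matrix.mul_assoc, hres]

theorem sub_sub_conjTranspose_aeval_eq_sum (hV : Vᴴ * V = 1) (hAV : A * V = V * H)
    (hAz : ∀ ℓ, IsUnit (A - z ℓ • 1)) (hHz : ∀ ℓ, IsUnit (H - z ℓ • 1))
    (hA : Aᴴ = (∑ ℓ, d ℓ • (A - z ℓ • 1)⁻¹) + aeval A π + F * Gᴴ) :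
    H - (Vᴴ * G) * (Vᴴ * F)ᴴ - (aeval H π)ᴴ = ∑ ℓ, star (d ℓ) • ((H - z ℓ • 1)⁻¹)ᴴ := by
  have h := congrArg conjTranspose (conjTranspose_eq_sum_smul_inv_of_mul_eq hV hAV hAz hHz hA)
  rw [conjTranspose_conjTranspose, conjTranspose_add, conjTranspose_add, conjTranspose_sum,
    conjTranspose_mul, conjTranspose_conjTranspose] at h
  simp only [conjTranspose_smul] at h
  rw [sub_sub, sub_eq_iff_eq_add]
  exact h.trans (by abel)

end Compression

section PartialFractions

variable {R : Type*} [CommRing R] {n : Type*} [Fintype n] [DecidableEq n] {A : Matrix n n R}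

theorem isUnit_aeval_of_dvd {r s : R[X]} (hrs : r ∣ s) (hs : IsUnit (aeval A s)) :
    IsUnit (aeval A r) := by
  obtain ⟨t, rfl⟩ := hrs
  rw [isUnit_iff_isUnit_det, map_mul, det_mul] at hs
  rw [isUnit_iff_isUnit_det]
  exact isUnit_of_mul_isUnit_left hs

theorem aeval_mul_inv_aeval_mul {s w : R[X]} (h : IsUnit (aeval A (s * w))) :
    aeval A w * (aeval A (s * w))⁻¹ = (aeval A s)⁻¹ := by
  have hw : IsUnit (aeval A w).det :=
    (isUnit_iff_isUnit_det _).mp (isUnit_aeval_of_dvd (dvd_mul_left w s) h)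
  rw [map_mul, mul_inv_rev, ← Matrix.mul_assoc, mul_nonsing_inv _ hw, Matrix.one_mul]

variable {ι : Type*} [Fintype ι] [DecidableEq ι] {z : ι → R} {a : R} {qq : R[X]}

theorem eq_X_sub_C_mul_prod_erase (hqfact : qq = C a * ∏ ℓ, (X - C (z ℓ))) (ℓ : ι) :
    qq = (X - C (z ℓ)) * (C a * ∏ j ∈ univ.erase ℓ, (X - C (z j))) := by
  rw [hqfact, ← mul_prod_erase _ _ (mem_univ ℓ), mul_left_comm]

theorem isUnit_sub_smul_one_of_isUnit_aeval (hqA : IsUnit (aeval A qq))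
    (hqfact : qq = C a * ∏ ℓ, (X - C (z ℓ))) (ℓ : ι) : IsUnit (A - z ℓ • 1) := by
  have h := isUnit_aeval_of_dvd (Dvd.intro _ (eq_X_sub_C_mul_prod_erase hqfact ℓ).symm) hqA
  simpa [Algebra.algebraMap_eq_smul_one] using h

theorem aeval_mul_inv_aeval_eq_sum {p π : R[X]} {d : ι → R} (hqA : IsUnit (aeval A qq))
    (hqfact : qq = C a * ∏ ℓ, (X - C (z ℓ)))
    (hfrac : p = (∑ ℓ, C (d ℓ) * (C a * ∏ j ∈ univ.erase ℓ, (X - C (z j)))) + π * qq) :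
    aeval A p * (aeval A qq)⁻¹ = (∑ ℓ, d ℓ • (A - z ℓ • 1)⁻¹) + aeval A π := by
  have hres : ∀ ℓ, aeval A (C a * ∏ j ∈ univ.erase ℓ, (X - C (z j))) * (aeval A qq)⁻¹ =
      (A - z ℓ • 1)⁻¹ := by
    intro ℓ
    rw [eq_X_sub_C_mul_prod_erase hqfact ℓ] at hqA ⊢
    rw [aeval_mul_inv_aeval_mul hqA]
    simp [Algebra.algebraMap_eq_smul_one]
  have hq : aeval A qq * (aeval A qq)⁻¹ = 1 :=
    mul_nonsing_inv _ ((isUnit_iff_isUnit_det _).mp hqA)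
  rw [hfrac, map_add, map_sum, Matrix.add_mul, Matrix.sum_mul, map_mul (aeval A) π,
    Matrix.mul_assoc, hq, Matrix.mul_one]
  congr 1
  refine sum_congr rfl fun ℓ _ => ?_
  rw [map_mul, aeval_C, Algebra.algebraMap_eq_smul_one, Matrix.smul_mul, Matrix.one_mul,
    Matrix.smul_mul, hres]

end PartialFractions

structure IsUnreducedHessenberg_s14 {R : Type*} [Zero R] {N : ℕ} (H : Matrix (Fin N) (Fin N) R) :
    Prop where
  eq_zero : ∀ i j : Fin N, (j : ℕ) + 1 < i → H i j = 0
  subdiag_ne_zero : ∀ i j : Fin N, (i : ℕ) = j + 1 → H i j ≠ 0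

def HessenbergRecurrence {R : Type*} [CommRing R] {N : ℕ} (H : Matrix (Fin N) (Fin N) R)
    (q : ℕ → R[X]) : Prop :=
  ∀ (k : ℕ) (hk : k + 1 < N), C (H ⟨k + 1, hk⟩ ⟨k, Nat.lt_of_succ_lt hk⟩) * q (k + 1) =
    X * q k - ∑ j : Fin (k + 1), C (H ⟨j, Nat.lt_trans j.isLt hk⟩ ⟨k, Nat.lt_of_succ_lt hk⟩) * q j

variable {R : Type*} [CommRing R] {N : ℕ} {H : Matrix (Fin N) (Fin N) R}

namespace IsUnreducedHessenberg_s14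

theorem sub_smul_one (hH : IsUnreducedHessenberg_s14 H) (z : R) :
    IsUnreducedHessenberg_s14 (H - z • 1) where
  eq_zero i j hij := by
    rw [Matrix.sub_apply, hH.eq_zero i j hij, Matrix.smul_apply, one_apply_ne (by omega),
      smul_zero, sub_zero]
  subdiag_ne_zero i j hij := by
    rw [Matrix.sub_apply, Matrix.smul_apply, one_apply_ne (by omega), smul_zero, sub_zero]
    exact hH.subdiag_ne_zero i j hij

theorem eq_zero_of_vecMul_eq_zero [NoZeroDivisors R] (hH : IsUnreducedHessenberg_s14 H)
    {x : Fin N → R} {m : ℕ} (hx : ∀ c : Fin N, (c : ℕ) < m → (x ᵥ* H) c = 0)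
    (hx0 : ∀ i : Fin N, (i : ℕ) = 0 → x i = 0) (i : Fin N) (him : (i : ℕ) ≤ m) : x i = 0 := by
  obtain ⟨i, hi⟩ := i
  induction i using Nat.strong_induction_on with
  | _ i ih =>
  cases i with
  | zero => exact hx0 _ rfl
  | succ k =>
    let c : Fin N := ⟨k, by omega⟩
    have hcol : (x ᵥ* H) c = x ⟨k + 1, hi⟩ * H ⟨k + 1, hi⟩ c := by
      refine sum_eq_single (⟨k + 1, hi⟩ : Fin N) (fun l _ hl => ?_)
        fun h => absurd (mem_univ _) h
      show x l * H l c = 0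
      obtain ⟨l, hlN⟩ := l
      rcases lt_trichotomy l (k + 1) with h | h | h
      · rw [ih l h hlN (h.trans_le him).le, zero_mul]
      · exact absurd (Fin.ext h) hl
      · rw [hH.eq_zero _ c h, mul_zero]
    have hxc := hx c (Nat.lt_of_succ_le him)
    rw [hcol] at hxc
    exact (mul_eq_zero.mp hxc).resolve_right (hH.subdiag_ne_zero _ _ rfl)

end IsUnreducedHessenberg_s14

theorem HessenbergRecurrence.vecMul_sub_smul_one_apply_eq_zero {q : ℕ → R[X]}
    (hq : HessenbergRecurrence H q) (hHess : ∀ i j : Fin N, (j : ℕ) + 1 < i → H i j = 0)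
    (z : R) (c : Fin N) (hc : (c : ℕ) + 1 < N) :
    ((fun k : Fin N => (q k).eval z) ᵥ* (H - z • 1)) c = 0 := by
  obtain ⟨c, hcN⟩ := c
  let f : ℕ → R := fun k => if hk : k < N then (q k).eval z * H ⟨k, hk⟩ ⟨c, hcN⟩ else 0
  have hrow : ((fun k : Fin N => (q k).eval z) ᵥ* H) ⟨c, hcN⟩ = ∑ k ∈ range (c + 2), f k := by
    calc _ = ∑ k : Fin N, f k := sum_congr rfl fun k _ => by simp [f, k.2]
      _ = ∑ k ∈ range N, f k := Fin.sum_univ_eq_sum_range f N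
      _ = _ := by
        refine (sum_subset (range_subset_range.mpr hc) fun k hkN hk => ?_).symm
        have hkN : k < N := mem_range.mp hkN
        simp only [mem_range, not_lt] at hk
        simp only [f, dif_pos hkN, hHess ⟨k, hkN⟩ ⟨c, hcN⟩ (show c + 1 < k by omega), mul_zero]
  have hrec := congrArg (eval z) (hq c hc)
  simp only [eval_mul, eval_C, eval_X, eval_sub, eval_finsetSum] at hrec
  rw [vecMul_sub, vecMul_smul, vecMul_one, Pi.sub_apply, Pi.smul_apply, hrow, sum_range_succ,
    ← Fin.sum_univ_eq_sum_range]
  simp only [f, Nat.lt_trans (Fin.is_lt _) hc, hc, dif_pos, smul_eq_mul, mul_comm (eval z (q _))]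
  linear_combination hrec

theorem IsUnreducedHessenberg_s14.inv_sub_smul_one_apply_eq_eval_mul [NoZeroDivisors R]
    (hH : IsUnreducedHessenberg_s14 H) {q : ℕ → R[X]} (hq : HessenbergRecurrence H q)
    (hq0 : q 0 = 1) {z : R} (hz : IsUnit (H - z • 1)) (hN : 0 < N) {i j : Fin N}
    (hij : (i : ℕ) ≤ j) : (H - z • 1)⁻¹ j i = (q i).eval z * (H - z • 1)⁻¹ j ⟨0, hN⟩ := by
  set M := H - z • 1
  set w : Fin N → R := fun k => (q k).eval z
  have hMM : M⁻¹ * M = 1 := nonsing_inv_mul _ ((isUnit_iff_isUnit_det _).mp hz)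
  have hx : ∀ c : Fin N, (c : ℕ) < j → ((M⁻¹ j - M⁻¹ j ⟨0, hN⟩ • w) ᵥ* M) c = 0 := by
    intro c hc
    rw [sub_vecMul, smul_vecMul, Pi.sub_apply, Pi.smul_apply, ← mul_apply_eq_vecMul, hMM,
      one_apply_ne (by omega),
      hq.vecMul_sub_smul_one_apply_eq_zero hH.eq_zero z c (by omega), smul_zero, sub_zero]
  have hx0 : ∀ k : Fin N, (k : ℕ) = 0 → (M⁻¹ j - M⁻¹ j ⟨0, hN⟩ • w) k = 0 := by
    intro k hk
    obtain rfl : k = ⟨0, hN⟩ := Fin.ext hk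
    simp [w, hq0]
  have h := (hH.sub_smul_one z).eq_zero_of_vecMul_eq_zero hx hx0 i hij
  rwa [Pi.sub_apply, Pi.smul_apply, sub_eq_zero, smul_eq_mul, mul_comm] at h

end Matrix

theorem stmt14_general (n N m₂ m₃ : ℕ) (hN : 1 ≤ N)
    (A : Matrix (Fin n) (Fin n) ℂ) (F G : Matrix (Fin n) (Fin m₃) ℂ)
    (p qq : Polynomial ℂ) (hqA : IsUnit (Polynomial.aeval A qq))
    (z : Fin m₂ → ℂ) (a : ℂ)
    (hqfact : qq = Polynomial.C a * ∏ ℓ : Fin m₂, (Polynomial.X - Polynomial.C (z ℓ)))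
    (hbml : Aᴴ = (Polynomial.aeval A p) * (Polynomial.aeval A qq)⁻¹ + F * Gᴴ)
    (V : Matrix (Fin n) (Fin N) ℂ) (hV : Vᴴ * V = 1)
    (H : Matrix (Fin N) (Fin N) ℂ)
    (hHess : ∀ i j : Fin N, (j : ℕ) + 1 < (i : ℕ) → H i j = 0)
    (hsub : ∀ (k : ℕ) (hk : k + 1 < N),
      0 < (H ⟨k + 1, hk⟩ ⟨k, Nat.lt_of_succ_lt hk⟩).re ∧
        (H ⟨k + 1, hk⟩ ⟨k, Nat.lt_of_succ_lt hk⟩).im = 0)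
    (hAV : A * V = V * H)
    (hzH : ∀ ℓ : Fin m₂, IsUnit (H - z ℓ • 1))
    (d : Fin m₂ → ℂ) (π : Polynomial ℂ)
    (hfrac : p = (∑ ℓ : Fin m₂, Polynomial.C (d ℓ) *
        (Polynomial.C a * ∏ j ∈ Finset.univ.erase ℓ, (Polynomial.X - Polynomial.C (z j)))) +
      π * qq)
    (q : ℕ → Polynomial ℂ) (hq0 : q 0 = 1)
    (hqrec : ∀ (k : ℕ) (hk : k + 1 < N),
      Polynomial.C (H ⟨k + 1, hk⟩ ⟨k, Nat.lt_of_succ_lt hk⟩) * q (k + 1) =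
        Polynomial.X * q k -
          ∑ j : Fin (k + 1),
            Polynomial.C (H ⟨(j : ℕ), Nat.lt_trans j.isLt hk⟩ ⟨k, Nat.lt_of_succ_lt hk⟩) *
              q (j : ℕ))
 :
    ∀ i j : Fin N, (i : ℕ) ≤ (j : ℕ) →
      (H - (Vᴴ * G) * (Vᴴ * F)ᴴ - (Polynomial.aeval H π)ᴴ) i j =
        ∑ ℓ : Fin m₂,
          (starRingEnd ℂ) (d ℓ) * (starRingEnd ℂ) ((q (i : ℕ)).eval (z ℓ)) *
            (starRingEnd ℂ) (((H - z ℓ • 1)⁻¹) j ⟨0, hN⟩) := by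
  intro i j hij
  have hH : IsUnreducedHessenberg_s14 H := ⟨hHess, fun ⟨i, hi⟩ ⟨k, _⟩ hik => by
    obtain rfl : i = k + 1 := hik
    exact fun h0 => (hsub k hi).1.ne' (by simp [h0])⟩
  have hA : Aᴴ = (∑ ℓ, d ℓ • (A - z ℓ • 1)⁻¹) + aeval A π + F * Gᴴ := by
    rw [hbml, aeval_mul_inv_aeval_eq_sum hqA hqfact hfrac]
  rw [sub_sub_conjTranspose_aeval_eq_sum hV hAV (isUnit_sub_smul_one_of_isUnit_aeval hqA hqfact)
    hzH hA, Matrix.sum_apply]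
  refine sum_congr rfl fun ℓ _ => ?_
  rw [Matrix.smul_apply, conjTranspose_apply,
    hH.inv_sub_smul_one_apply_eq_eval_mul hqrec hq0 (hzH ℓ) hN hij, star_mul', smul_eq_mul,
    mul_assoc]
  simp only [starRingEnd_apply]

/-- Under the BML and Arnoldi hypotheses, with the partial fraction
decomposition `p/qq = Σ_ℓ d_ℓ/(z - z_ℓ) + π`, the part of
`H - G_N F_Nᴴ - π(H)ᴴ` on and above the main diagonal is given by
`Σ_ℓ conj(d_ℓ) conj(q_{i-1}(z_ℓ)) conj(((H - z_ℓ I)⁻¹)_{j,1})`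
(`0`-based: row `i`, column `j`, `i ≤ j`). -/
theorem stmt14 (n N m₂ m₃ : ℕ) (hN : 1 ≤ N) (hNn : N ≤ n)
    (A : Matrix (Fin n) (Fin n) ℂ) (F G : Matrix (Fin n) (Fin m₃) ℂ)
    (p qq : Polynomial ℂ) (hqA : IsUnit (Polynomial.aeval A qq))
    (z : Fin m₂ → ℂ) (hzinj : Function.Injective z) (a : ℂ) (ha : a ≠ 0)
    (hqfact : qq = Polynomial.C a * ∏ ℓ : Fin m₂, (Polynomial.X - Polynomial.C (z ℓ)))
    (hbml : Aᴴ = (Polynomial.aeval A p) * (Polynomial.aeval A qq)⁻¹ + F * Gᴴ)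
    (b : Fin n → ℂ) (hb : b ≠ 0)
    (V : Matrix (Fin n) (Fin N) ℂ) (hV : Vᴴ * V = 1)
    (hv1 : (fun i => V i ⟨0, hN⟩) = (((nrm b)⁻¹ : ℝ) : ℂ) • b)
    (H : Matrix (Fin N) (Fin N) ℂ)
    (hHess : ∀ i j : Fin N, (j : ℕ) + 1 < (i : ℕ) → H i j = 0)
    (hsub : ∀ (k : ℕ) (hk : k + 1 < N),
      0 < (H ⟨k + 1, hk⟩ ⟨k, Nat.lt_of_succ_lt hk⟩).re ∧
        (H ⟨k + 1, hk⟩ ⟨k, Nat.lt_of_succ_lt hk⟩).im = 0)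
    (hAV : A * V = V * H)
    (hzH : ∀ ℓ : Fin m₂, IsUnit (H - z ℓ • 1))
    (d : Fin m₂ → ℂ) (π : Polynomial ℂ)
    (hfrac : p = (∑ ℓ : Fin m₂, Polynomial.C (d ℓ) *
        (Polynomial.C a * ∏ j ∈ Finset.univ.erase ℓ, (Polynomial.X - Polynomial.C (z j)))) +
      π * qq)
    (q : ℕ → Polynomial ℂ) (hq0 : q 0 = 1)
    (hqrec : ∀ (k : ℕ) (hk : k + 1 < N),
      Polynomial.C (H ⟨k + 1, hk⟩ ⟨k, Nat.lt_of_succ_lt hk⟩) * q (k + 1) =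
        Polynomial.X * q k -
          ∑ j : Fin (k + 1),
            Polynomial.C (H ⟨(j : ℕ), Nat.lt_trans j.isLt hk⟩ ⟨k, Nat.lt_of_succ_lt hk⟩) *
              q (j : ℕ))
 :
    ∀ i j : Fin N, (i : ℕ) ≤ (j : ℕ) →
      (H - (Vᴴ * G) * (Vᴴ * F)ᴴ - (Polynomial.aeval H π)ᴴ) i j =
        ∑ ℓ : Fin m₂,
          (starRingEnd ℂ) (d ℓ) * (starRingEnd ℂ) ((q (i : ℕ)).eval (z ℓ)) *
            (starRingEnd ℂ) (((H - z ℓ • 1)⁻¹) j ⟨0, hN⟩) :=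
  stmt14_general n N m₂ m₃ hN A F G p qq hqA z a hqfact hbml V hV H hHess hsub hAV hzH d π hfrac q
    hq0 hqrec
end
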